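/- arXiv:2604.26177 — 13 statements merged into one kernel-verified Lean document; each statement's English description precedes it below -/
import Mathlib

section
/- Let A be an abelian group, n ≥ 1, and let k₁, …, kₙ be integers, not all zero, with Σᵢ kᵢ = 0, and let d be the greatest common divisor of the kᵢ. Then the subgroup B := {(a₁,…,aₙ) ∈ Aⁿ : Σᵢ kᵢ • aᵢ = 0} is isomorphic as an abelian group to A^(n−1) × A[d], where A[d] := {a ∈ A : d • a = 0} is the d-torsion subgroup of A. -/
/-- **Lemma 4.1.** Let `A` be an abelian group, `n ≥ 1`, and `k₁, …, kₙ` integers, not all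
zero, summing to `0`, with `d = gcd(k₁, …, kₙ)`.  Then the subgroup
`B = {(a₁,…,aₙ) ∈ Aⁿ : Σᵢ kᵢ • aᵢ = 0}` is isomorphic to `A^(n-1) × A[d]`, where `A[d]`
is the `d`-torsion subgroup of `A`. -/
theorem stmt0 {A : Type*} [AddCommGroup A] (n : ℕ) (hn : 1 ≤ n)
    (k : Fin n → ℤ) (hk : k ≠ 0) (hsum : ∑ i, k i = 0)
    (d : ℕ) (hd : (d : ℤ) = Finset.univ.gcd k)
    (B : AddSubgroup (Fin n → A)) (hB : ∀ v, v ∈ B ↔ ∑ i, k i • v i = 0)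
    (Td : AddSubgroup A) (hTd : ∀ a, a ∈ Td ↔ (d : ℤ) • a = 0) :
    Nonempty (B ≃+ ((Fin (n - 1) → A) × Td)) := by
  classical
  have hd0 : (d : ℤ) ≠ 0 := by
    rw [hd]
    intro h
    apply hk
    funext i
    exact Finset.gcd_eq_zero_iff.mp h i (Finset.mem_univ i)
  have hdvd : ∀ i, (d : ℤ) ∣ k i := fun i => hd ▸ Finset.gcd_dvd (Finset.mem_univ i)
  set k' : Fin n → ℤ := fun i => k i / (d : ℤ) with hk'def
  have hkk' : ∀ i, k i = (d : ℤ) * k' i := fun i => (Int.mul_ediv_cancel' (hdvd i)).symm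
  -- Bezout coefficients
  obtain ⟨c, hc⟩ : ∃ c : Fin n → ℤ, ∑ i, c i • k i = (d : ℤ) := by
    set I := Ideal.span (Set.range k) with hI
    have hprin : I.IsPrincipal := IsPrincipalIdealRing.principal I
    set e := Submodule.IsPrincipal.generator I with he
    have hIe : Ideal.span {e} = I := Ideal.span_singleton_generator I
    have hek : ∀ i, e ∣ k i := fun i => by
      rw [← Ideal.mem_span_singleton, hIe]
      exact Ideal.subset_span ⟨i, rfl⟩
    have hed : e ∣ (d : ℤ) := hd ▸ Finset.dvd_gcd fun i _ => hek i
    have hmem : (d : ℤ) ∈ I := by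
      rw [← hIe, Ideal.mem_span_singleton]; exact hed
    exact (Submodule.mem_span_range_iff_exists_fun ℤ).mp hmem
  have hck' : ∑ i, c i * k' i = 1 := by
    have h1 : (d : ℤ) * ∑ i, c i * k' i = ∑ i, c i • k i := by
      rw [Finset.mul_sum]
      refine Finset.sum_congr rfl fun i _ => ?_
      rw [smul_eq_mul, hkk' i]; ring
    exact mul_left_cancel₀ hd0 (by rw [mul_one, h1, hc])
  -- the linear functional given by the Bezout coefficients
  let lam : (Fin n → ℤ) →ₗ[ℤ] ℤ :=
    { toFun := fun x => ∑ i, c i * x i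
      map_add' := fun x y => by
        simp [mul_add, Finset.sum_add_distrib]
      map_smul' := fun m x => by
        simp only [Pi.smul_apply, smul_eq_mul, RingHom.id_apply, Finset.mul_sum]
        exact Finset.sum_congr rfl fun i _ => by ring }
  have hlamk' : lam k' = 1 := hck'
  set P := LinearMap.ker lam with hP
  -- splitting of ℤⁿ
  have hmemP : ∀ x : Fin n → ℤ, x - lam x • k' ∈ P := fun x => by
    rw [hP, LinearMap.mem_ker, map_sub, map_smul, hlamk', smul_eq_mul, mul_one, sub_self]
  let e1 : (Fin n → ℤ) ≃ₗ[ℤ] P × ℤ :=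
    { toFun := fun x => (⟨x - lam x • k', hmemP x⟩, lam x)
      invFun := fun y => (y.1 : Fin n → ℤ) + y.2 • k'
      left_inv := fun x => by
        show x - lam x • k' + lam x • k' = x
        abel
      right_inv := fun y => by
        have hy : lam (y.1 : Fin n → ℤ) = 0 := LinearMap.mem_ker.mp y.1.2
        have hl : lam ((y.1 : Fin n → ℤ) + y.2 • k') = y.2 := by
          rw [map_add, map_smul, hlamk', hy, smul_eq_mul, mul_one, zero_add]
        refine Prod.ext (Subtype.ext ?_) hl
        show ((y.1 : Fin n → ℤ) + y.2 • k') - lam ((y.1 : Fin n → ℤ) + y.2 • k') • k'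
            = (y.1 : Fin n → ℤ)
        rw [hl]; abel
      map_add' := fun x y => by
        refine Prod.ext (Subtype.ext ?_) (map_add lam x y)
        show (x + y) - lam (x + y) • k' = (x - lam x • k') + (y - lam y • k')
        rw [map_add, add_smul]; abel
      map_smul' := fun m x => by
        refine Prod.ext (Subtype.ext ?_) (map_smul lam m x)
        show m • x - lam (m • x) • k' = m • (x - lam x • k')
        rw [map_smul, smul_eq_mul, ← smul_smul, ← smul_sub] }
  have he1symm : e1.symm (0, 1) = k' := by
    have h : e1 k' = (0, 1) := by
      refine Prod.ext (Subtype.ext ?_) hlamk'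
      show k' - lam k' • k' = ((0 : P) : Fin n → ℤ)
      rw [hlamk', one_smul, sub_self]; rfl
    rw [← h, LinearEquiv.symm_apply_apply]
  -- a basis of the kernel
  obtain ⟨m, bP⟩ := Submodule.basisOfPid (Pi.basisFun ℤ (Fin n)) P
  haveI : Module.Free ℤ P := Module.Free.of_basis bP
  haveI : Module.Finite ℤ P := Module.Finite.of_basis bP
  have hmn : m + 1 = n := by
    have h2 := LinearEquiv.finrank_eq e1
    rw [Module.finrank_prod, Module.finrank_eq_card_basis bP, Module.finrank_self,
      Module.finrank_pi, Fintype.card_fin, Fintype.card_fin] at h2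
    omega
  let bP' : Module.Basis (Fin (n - 1)) ℤ P := bP.reindex (finCongr (by omega))
  -- dualizing
  let E : (Fin n → A) ≃ₗ[ℤ] ((Fin n → ℤ) →ₗ[ℤ] A) := (Pi.basisFun ℤ (Fin n)).constr ℤ
  have hE : ∀ (v : Fin n → A) (x : Fin n → ℤ), E v x = ∑ i, x i • v i := by
    intro v x
    simp [E, Module.Basis.constr_apply_fintype]
  let W1 : ((Fin n → ℤ) →ₗ[ℤ] A) ≃ₗ[ℤ] ((P × ℤ) →ₗ[ℤ] A) :=
    LinearEquiv.arrowCongr e1 (LinearEquiv.refl ℤ A)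
  let W2 : ((P × ℤ) →ₗ[ℤ] A) ≃ₗ[ℤ] ((P →ₗ[ℤ] A) × (ℤ →ₗ[ℤ] A)) :=
    (LinearMap.coprodEquiv ℤ (M := P) (M₂ := ℤ) (M₃ := A) (R := ℤ)).symm
  let W3 : (P →ₗ[ℤ] A) ≃ₗ[ℤ] (Fin (n - 1) → A) :=
    (Module.Basis.constr bP' ℤ (M' := A)).symm
  let W4 : (ℤ →ₗ[ℤ] A) ≃ₗ[ℤ] A := LinearMap.ringLmapEquivSelf ℤ ℤ A
  let Ψ : (Fin n → A) ≃ₗ[ℤ] ((Fin (n - 1) → A) × A) :=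
    E ≪≫ₗ W1 ≪≫ₗ W2 ≪≫ₗ LinearEquiv.prodCongr W3 W4
  have hΨ2 : ∀ v, (Ψ v).2 = E v k' := by
    intro v
    have hr : (Ψ v).2 = E v (e1.symm (0, 1)) := rfl
    rw [hr, he1symm]
  have hmemB : ∀ v, v ∈ B ↔ (Ψ v).2 ∈ Td := by
    intro v
    have hdk : (d : ℤ) • k' = k := funext fun i => by
      rw [Pi.smul_apply, smul_eq_mul, ← hkk']
    have key : (d : ℤ) • (Ψ v).2 = ∑ i, k i • v i := by
      rw [hΨ2, ← map_smul, hdk, hE]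
    rw [hB, hTd, ← key]
  refine ⟨{
    toFun := fun b => ((Ψ (b : Fin n → A)).1, ⟨(Ψ (b : Fin n → A)).2, (hmemB _).mp b.2⟩)
    invFun := fun w => ⟨Ψ.symm (w.1, (w.2 : A)), (hmemB _).mpr (by
      rw [LinearEquiv.apply_symm_apply]; exact w.2.2)⟩
    left_inv := fun b => by
      refine Subtype.ext ?_
      show Ψ.symm ((Ψ (b : Fin n → A)).1, (Ψ (b : Fin n → A)).2) = (b : Fin n → A)
      simp
    right_inv := fun w => by
      refine Prod.ext ?_ (Subtype.ext ?_) <;>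
        simp
    map_add' := fun a b => by
      refine Prod.ext ?_ (Subtype.ext ?_) <;>
        simp [map_add]
  }⟩
end

section
/- Let A be an abelian group, n ≥ 2, and let k₁, …, kₙ be integers, not all zero, with Σᵢ kᵢ = 0. Set B := {(a₁,…,aₙ) ∈ Aⁿ : Σᵢ kᵢ • aᵢ = 0}. Fix distinct indices i ≠ j, let Δᵢⱼ := {(a₁,…,aₙ) ∈ Aⁿ : aᵢ = aⱼ}, and let κᵢⱼ be the (n−1)-tuple of integers obtained from (k₁,…,kₙ) by deleting kᵢ and kⱼ and adjoining kᵢ + kⱼ. If κᵢⱼ is not the zero tuple, then B ∩ Δᵢⱼ is isomorphic as an abelian group to A^(n−2) × A[e], where e = gcd(κᵢⱼ); if κᵢⱼ is the zero tuple, then B ∩ Δᵢⱼ = Δᵢⱼ. -/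
section Helpers

variable {A : Type*} [AddCommGroup A]

def torsub (A : Type*) [AddCommGroup A] (d : ℤ) : AddSubgroup A where
  carrier := {a | d • a = 0}
  zero_mem' := by simp
  add_mem' := by
    intro a b ha hb
    simp only [Set.mem_setOf_eq, smul_add] at *
    rw [ha, hb, add_zero]
  neg_mem' := by
    intro a ha
    simp only [Set.mem_setOf_eq, smul_neg] at *
    rw [ha, neg_zero]

lemma torsub_mem {d : ℤ} {a : A} : a ∈ torsub A d ↔ d • a = 0 := Iff.rfl

lemma smul_zero_of_dvd {d1 d2 : ℤ} (h : d1 ∣ d2) {a : A} (ha : d1 • a = 0) : d2 • a = 0 := by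
  obtain ⟨s, rfl⟩ := h
  rw [mul_comm, mul_smul, ha, smul_zero]

def coefHom (A : Type*) [AddCommGroup A] {ι : Type*} [Fintype ι] (c : ι → ℤ) :
    (ι → A) →+ A where
  toFun w := ∑ l, c l • w l
  map_zero' := by simp
  map_add' x y := by simp [smul_add, Finset.sum_add_distrib]

def ksub (A : Type*) [AddCommGroup A] {ι : Type*} [Fintype ι] (c : ι → ℤ) :
    AddSubgroup (ι → A) := (coefHom A c).ker

lemma ksub_mem {ι : Type*} [Fintype ι] {c : ι → ℤ} {w : ι → A} :
    w ∈ ksub A c ↔ ∑ l, c l • w l = 0 := Iff.rfl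

def subEquiv {G H : Type*} [AddCommGroup G] [AddCommGroup H] (E : G ≃+ H)
    (S : AddSubgroup G) (S' : AddSubgroup H) (h : ∀ x, x ∈ S ↔ E x ∈ S') : S ≃+ S' where
  toFun x := ⟨E x, (h x).1 x.2⟩
  invFun y := ⟨E.symm y, (h _).2 (by simpa using y.2)⟩
  left_inv x := by ext; simp
  right_inv y := by ext; simp
  map_add' x y := by ext; simp

def subEquivProd {G H G' : Type*} [AddCommGroup G] [AddCommGroup H] [AddCommGroup G']
    (E : G ≃+ H × G') (S : AddSubgroup G) (S' : AddSubgroup G')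
    (h : ∀ x, x ∈ S ↔ (E x).2 ∈ S') : S ≃+ H × S' where
  toFun x := ((E x).1, ⟨(E x).2, (h x).1 x.2⟩)
  invFun y := ⟨E.symm (y.1, (y.2 : G')), (h _).2 (by simp)⟩
  left_inv x := by ext <;> simp
  right_inv y := by ext <;> simp
  map_add' x y := by ext <;> simp

def piSucc (A : Type*) [AddCommGroup A] (m : ℕ) : (Fin (m+1) → A) ≃+ A × (Fin m → A) where
  toFun w := (w 0, Fin.tail w)
  invFun p := Fin.cons p.1 p.2
  left_inv w := Fin.cons_self_tail w
  right_inv p := by simp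
  map_add' x y := rfl

def zeroProd (A T : Type*) [AddCommGroup A] [AddCommGroup T] : T ≃+ (Fin 0 → A) × T where
  toFun t := (fun x => x.elim0, t)
  invFun p := p.2
  left_inv t := rfl
  right_inv p := by
    ext x
    · exact x.elim0
    · rfl
  map_add' x y := by
    ext z
    · exact z.elim0
    · rfl

def reindexAddEquiv {α β : Type*} (A : Type*) [AddCommGroup A] (σ : α ≃ β) :
    (β → A) ≃+ (α → A) where
  toFun f := f ∘ σ
  invFun f := f ∘ σ.symm
  left_inv f := by ext b; simp
  right_inv f := by ext a; simp
  map_add' f g := rfl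

lemma exists_sl2 (p q : ℤ) : ∃ α β γ δ : ℤ, α * δ - β * γ = 1 ∧
    (Int.gcd p q : ℤ) * α = p ∧ (Int.gcd p q : ℤ) * β = q := by
  by_cases h : p = 0 ∧ q = 0
  · exact ⟨1, 0, 0, 1, by ring, by simp [h.1, h.2], by simp [h.1, h.2]⟩
  · have hg : 0 < Int.gcd p q := by
      rcases Nat.eq_zero_or_pos (Int.gcd p q) with h0 | h0
      · exact absurd (Int.gcd_eq_zero_iff.1 h0) h
      · exact h0
    set g : ℤ := (Int.gcd p q : ℤ) with hgdef
    have hco : Int.gcd (p / g) (q / g) = 1 := Int.gcd_div_gcd_div_gcd hg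
    have hbez : ((Int.gcd (p / g) (q / g) : ℤ)) =
        (p / g) * Int.gcdA (p / g) (q / g) + (q / g) * Int.gcdB (p / g) (q / g) :=
      Int.gcd_eq_gcd_ab _ _
    rw [hco] at hbez
    push_cast at hbez
    refine ⟨p / g, q / g, -(Int.gcdB (p / g) (q / g)), Int.gcdA (p / g) (q / g),
      by linarith [hbez], ?_, ?_⟩
    · exact Int.mul_ediv_cancel' (Int.gcd_dvd_left _ _)
    · exact Int.mul_ediv_cancel' (Int.gcd_dvd_right _ _)

def sl2Equiv {A : Type*} [AddCommGroup A] (α β γ δ : ℤ) (hdet : α * δ - β * γ = 1) :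
    A × A ≃+ A × A where
  toFun x := (γ • x.1 + δ • x.2, α • x.1 + β • x.2)
  invFun x := (δ • x.2 - β • x.1, α • x.1 - γ • x.2)
  left_inv x := by
    ext
    · show δ • (α • x.1 + β • x.2) - β • (γ • x.1 + δ • x.2) = x.1
      match_scalars <;> first | ring1 | linear_combination hdet | linear_combination -hdet
    · show α • (γ • x.1 + δ • x.2) - γ • (α • x.1 + β • x.2) = x.2
      match_scalars <;> first | ring1 | linear_combination hdet | linear_combination -hdet
  right_inv x := by
    ext
    · show γ • (δ • x.2 - β • x.1) + δ • (α • x.1 - γ • x.2) = x.1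
      match_scalars <;> first | ring1 | linear_combination hdet | linear_combination -hdet
    · show α • (δ • x.2 - β • x.1) + β • (α • x.1 - γ • x.2) = x.2
      match_scalars <;> first | ring1 | linear_combination hdet | linear_combination -hdet
  map_add' x y := by
    ext
    · show γ • (x.1 + y.1) + δ • (x.2 + y.2) = γ • x.1 + δ • x.2 + (γ • y.1 + δ • y.2)
      module
    · show α • (x.1 + y.1) + β • (x.2 + y.2) = α • x.1 + β • x.2 + (α • y.1 + β • y.2)
      module

end Helpers

lemma main_lemma {A : Type*} [AddCommGroup A] :
    ∀ (m : ℕ) (c : Fin (m+1) → ℤ),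
      Nonempty ((ksub A c) ≃+ ((Fin m → A) × torsub A (Finset.univ.gcd c))) := by
  intro m
  induction m with
  | zero =>
    intro c
    let E0 : (Fin 1 → A) ≃+ A :=
      { toFun := fun w => w 0
        invFun := fun a _ => a
        left_inv := fun w => funext fun l => by rw [Fin.eq_zero l]
        right_inv := fun a => rfl
        map_add' := fun _ _ => rfl }
    have hmem : ∀ w, w ∈ ksub A c ↔ E0 w ∈ torsub A (Finset.univ.gcd c) := by
      intro w
      rw [ksub_mem, torsub_mem, Fin.sum_univ_one]
      constructor
      · intro h
        refine smul_zero_of_dvd (Finset.dvd_gcd fun b _ => ?_) h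
        rw [Fin.eq_zero b]
      · intro h
        exact smul_zero_of_dvd (Finset.gcd_dvd (Finset.mem_univ 0)) h
    exact ⟨(subEquiv E0 _ _ hmem).trans (zeroProd A _)⟩
  | succ m ih =>
    intro c
    obtain ⟨α, β, γ, δ, hdet, hα, hβ⟩ := exists_sl2 (c 0) (c 1)
    set g : ℤ := (Int.gcd (c 0) (c 1) : ℤ) with hgdef
    set t : Fin m → ℤ := fun l => c l.succ.succ with htdef
    set c2 : Fin (m+1) → ℤ := Fin.cons g t with hc2def
    let Ψ : A × A ≃+ A × A := sl2Equiv α β γ δ hdet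
    let E : (Fin (m+2) → A) ≃+ A × (Fin (m+1) → A) :=
      (piSucc A (m+1)).trans <|
      ((AddEquiv.refl A).prodCongr (piSucc A m)).trans <|
      (AddEquiv.prodAssoc).symm.trans <|
      (Ψ.prodCongr (AddEquiv.refl (Fin m → A))).trans <|
      (AddEquiv.prodAssoc).trans <|
      ((AddEquiv.refl A).prodCongr (piSucc A m).symm)
    have hE2 : ∀ w : Fin (m+2) → A,
        (E w).2 = Fin.cons (α • w 0 + β • w 1) (fun l => w l.succ.succ) := fun _ => rfl
    have hsum : ∀ w : Fin (m+2) → A, ∑ l, c l • w l = ∑ l, c2 l • (E w).2 l := by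
      intro w
      simp only [hE2 w, Fin.sum_univ_succ, Fin.cons_zero, Fin.cons_succ, hc2def, htdef,
        Fin.succ_zero_eq_one]
      rw [smul_add, smul_smul, smul_smul, hα, hβ]
      exact (add_assoc _ _ _).symm
    have hmem : ∀ x, x ∈ ksub A c ↔ (E x).2 ∈ ksub A c2 := by
      intro x
      rw [ksub_mem, ksub_mem, hsum x]
    obtain ⟨F⟩ := ih c2
    have d1 : Finset.univ.gcd c ∣ Finset.univ.gcd c2 := by
      refine Finset.dvd_gcd fun b _ => ?_
      refine Fin.cases ?_ (fun l => ?_) b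
      · rw [hc2def, Fin.cons_zero, hgdef]
        exact Int.dvd_coe_gcd (Finset.gcd_dvd (Finset.mem_univ 0)) (Finset.gcd_dvd (Finset.mem_univ 1))
      · rw [hc2def, Fin.cons_succ]
        exact Finset.gcd_dvd (Finset.mem_univ _)
    have d2 : Finset.univ.gcd c2 ∣ Finset.univ.gcd c := by
      refine Finset.dvd_gcd fun b _ => ?_
      have hg0 : Finset.univ.gcd c2 ∣ g := by
        have := Finset.gcd_dvd (f := c2) (Finset.mem_univ 0)
        rwa [hc2def, Fin.cons_zero] at this
      refine Fin.cases ?_ (fun l => ?_) b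
      · exact hg0.trans (hgdef ▸ Int.gcd_dvd_left (c 0) (c 1))
      · refine Fin.cases ?_ (fun l' => ?_) l
        · rw [Fin.succ_zero_eq_one]
          exact hg0.trans (hgdef ▸ Int.gcd_dvd_right (c 0) (c 1))
        · have := Finset.gcd_dvd (f := c2) (Finset.mem_univ l'.succ)
          rwa [hc2def, Fin.cons_succ] at this
    let torE : torsub A (Finset.univ.gcd c2) ≃+ torsub A (Finset.univ.gcd c) :=
      subEquiv (AddEquiv.refl A) _ _ (fun a => by
        rw [torsub_mem, torsub_mem]
        exact ⟨fun h => smul_zero_of_dvd d2 h, fun h => smul_zero_of_dvd d1 h⟩)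
    exact ⟨(subEquivProd E _ _ hmem).trans <|
      ((AddEquiv.refl A).prodCongr F).trans <|
      (AddEquiv.prodAssoc).symm.trans <|
      ((piSucc A m).symm.prodCongr torE)⟩

def extFun {A : Type*} {n : ℕ} (i j : Fin n) (hij : i ≠ j) (w : {l : Fin n // l ≠ j} → A) :
    Fin n → A :=
  fun l => if h : l = j then w ⟨i, hij⟩ else w ⟨l, h⟩

lemma extFun_i {A : Type*} {n : ℕ} (i j : Fin n) (hij : i ≠ j) (w : {l : Fin n // l ≠ j} → A) :
    extFun i j hij w i = w ⟨i, hij⟩ := dif_neg hij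

lemma extFun_j {A : Type*} {n : ℕ} (i j : Fin n) (hij : i ≠ j) (w : {l : Fin n // l ≠ j} → A) :
    extFun i j hij w j = w ⟨i, hij⟩ := dif_pos rfl

lemma extFun_coe {A : Type*} {n : ℕ} (i j : Fin n) (hij : i ≠ j) (w : {l : Fin n // l ≠ j} → A)
    (l : {l : Fin n // l ≠ j}) : extFun i j hij w l = w l := dif_neg l.2

/-- **Corollary 4.2.** With `B = {(a₁,…,aₙ) ∈ Aⁿ : Σᵢ kᵢ • aᵢ = 0}`, distinct indices
`i ≠ j`, the diagonal `Δᵢⱼ = {a ∈ Aⁿ : aᵢ = aⱼ}`, and `κᵢⱼ` the tuple obtained by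
deleting `kᵢ, kⱼ` and adjoining `kᵢ + kⱼ`: if `κᵢⱼ` is not the zero tuple then
`B ∩ Δᵢⱼ ≅ A^(n-2) × A[e]` where `e = gcd(κᵢⱼ)`; if `κᵢⱼ` is the zero tuple then
`B ∩ Δᵢⱼ = Δᵢⱼ`. -/
theorem stmt1 {A : Type*} [AddCommGroup A] (n : ℕ) (hn : 2 ≤ n)
    (k : Fin n → ℤ) (hk : k ≠ 0) (hsum : ∑ i, k i = 0)
    (i j : Fin n) (hij : i ≠ j)
    (B : AddSubgroup (Fin n → A)) (hB : ∀ v, v ∈ B ↔ ∑ l, k l • v l = 0)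
    (Δ : AddSubgroup (Fin n → A)) (hΔ : ∀ v, v ∈ Δ ↔ v i = v j)
    (e : ℕ) (he : e = Int.gcd (k i + k j) (((Finset.univ.erase i).erase j).gcd k))
    (Te : AddSubgroup A) (hTe : ∀ a, a ∈ Te ↔ (e : ℤ) • a = 0) :
    (¬(k i + k j = 0 ∧ ∀ l, l ≠ i → l ≠ j → k l = 0) →
      Nonempty (↥(B ⊓ Δ) ≃+ ((Fin (n - 2) → A) × Te))) ∧
    ((k i + k j = 0 ∧ ∀ l, l ≠ i → l ≠ j → k l = 0) → B ⊓ Δ = Δ) := by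
  constructor
  · intro _
    obtain ⟨m, rfl⟩ : ∃ m, n = m + 2 := ⟨n - 2, by omega⟩
    set c' : {l : Fin (m+2) // l ≠ j} → ℤ :=
      fun l => if (l : Fin (m+2)) = i then k i + k j else k (l : Fin (m+2)) with hc'
    -- the key sum identity on the diagonal
    have hsum2 : ∀ v : Fin (m+2) → A, v i = v j →
        ∑ l, k l • v l = ∑ l : {l : Fin (m+2) // l ≠ j}, c' l • v (l : Fin (m+2)) := by
      intro v hv
      have h1 : ∑ l ∈ Finset.univ.erase j, (if l = i then k i + k j else k l) • v l
          = ∑ l : {l : Fin (m+2) // l ≠ j}, c' l • v (l : Fin (m+2)) :=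
        Finset.sum_subtype (Finset.univ.erase j) (fun l => by simp)
          (fun l => (if l = i then k i + k j else k l) • v l)
      rw [← h1]
      have hjmem : j ∈ (Finset.univ : Finset (Fin (m+2))) := Finset.mem_univ j
      have himem : i ∈ (Finset.univ.erase j : Finset (Fin (m+2))) :=
        Finset.mem_erase.2 ⟨hij, Finset.mem_univ i⟩
      rw [← Finset.add_sum_erase _ _ hjmem]
      rw [← Finset.add_sum_erase _ (fun l => k l • v l) himem]
      rw [← Finset.add_sum_erase _ (fun l => (if l = i then k i + k j else k l) • v l) himem]
      rw [if_pos rfl]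
      have h2 : ∑ l ∈ (Finset.univ.erase j).erase i,
            (if l = i then k i + k j else k l) • v l
          = ∑ l ∈ (Finset.univ.erase j).erase i, k l • v l :=
        Finset.sum_congr rfl (fun l hl => by rw [if_neg (Finset.mem_erase.1 hl).1])
      rw [h2]
      rw [hv, add_smul]
      abel
    -- B ⊓ Δ is isomorphic to the kernel subgroup for c'
    have hdiag : ∀ w : {l : Fin (m+2) // l ≠ j} → A,
        extFun i j hij w i = extFun i j hij w j := by
      intro w
      rw [extFun_i, extFun_j]
    let Θ : ↥(B ⊓ Δ) ≃+ ksub A c' :=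
      { toFun := fun v => ⟨fun l => v.1 l, by
          rw [ksub_mem]
          have hv := v.2
          rw [AddSubgroup.mem_inf, hB, hΔ] at hv
          rw [← hsum2 v.1 hv.2]
          exact hv.1⟩
        invFun := fun w => ⟨extFun i j hij w.1, by
          rw [AddSubgroup.mem_inf, hB, hΔ]
          refine ⟨?_, hdiag w.1⟩
          rw [hsum2 _ (hdiag w.1)]
          rw [Finset.sum_congr rfl (fun l _ => by rw [extFun_coe i j hij w.1 l])]
          exact w.2⟩
        left_inv := fun v => by
          apply Subtype.ext
          funext l
          show extFun i j hij (fun l' => v.1 (l' : Fin (m+2))) l = v.1 l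
          by_cases h : l = j
          · rw [h, extFun_j]
            have hv := v.2
            rw [AddSubgroup.mem_inf, hΔ] at hv
            exact hv.2
          · exact extFun_coe i j hij _ ⟨l, h⟩
        right_inv := fun w => by
          apply Subtype.ext
          funext l
          exact extFun_coe i j hij w.1 l
        map_add' := fun v v' => by
          apply Subtype.ext
          funext l
          rfl }
    have hcard : Fintype.card {l : Fin (m+2) // l ≠ j} = m + 1 := by
      have h2 : Fintype.card {l : Fin (m+2) // ¬ (l = j)} = m + 1 := by
        rw [Fintype.card_subtype_compl, Fintype.card_subtype_eq, Fintype.card_fin]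
        omega
      exact h2
    let σ : Fin (m+1) ≃ {l : Fin (m+2) // l ≠ j} := (Fintype.equivFinOfCardEq hcard).symm
    set cc : Fin (m+1) → ℤ := fun l => c' (σ l) with hcc
    let E2 : ksub A c' ≃+ ksub A cc :=
      subEquiv (reindexAddEquiv A σ) (ksub A c') (ksub A cc) (fun w => by
        have hs : ∑ l' : Fin (m+1), cc l' • (reindexAddEquiv A σ w) l'
            = ∑ l : {l : Fin (m+2) // l ≠ j}, c' l • w l :=
          Fintype.sum_equiv σ _ _ (fun l' => rfl)
        rw [ksub_mem, ksub_mem, hs])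
    obtain ⟨F⟩ := main_lemma (A := A) m cc
    -- divisibility facts
    have dA : Finset.univ.gcd cc ∣ (e : ℤ) := by
      rw [he]
      refine Int.dvd_coe_gcd ?_ ?_
      · have hval : cc (σ.symm ⟨i, hij⟩) = k i + k j := by
          simp [hcc, hc', Equiv.apply_symm_apply]
        have hd := Finset.gcd_dvd (f := cc) (Finset.mem_univ (σ.symm ⟨i, hij⟩))
        rwa [hval] at hd
      · refine Finset.dvd_gcd fun b hb => ?_
        have hbj : b ≠ j := (Finset.mem_erase.1 hb).1
        have hbi : b ≠ i := (Finset.mem_erase.1 (Finset.mem_erase.1 hb).2).1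
        have hval : cc (σ.symm ⟨b, hbj⟩) = k b := by
          simp [hcc, hc', Equiv.apply_symm_apply, hbi]
        have hd := Finset.gcd_dvd (f := cc) (Finset.mem_univ (σ.symm ⟨b, hbj⟩))
        rwa [hval] at hd
    have dB : (e : ℤ) ∣ Finset.univ.gcd cc := by
      refine Finset.dvd_gcd fun b _ => ?_
      by_cases hbi : ((σ b : {l : Fin (m+2) // l ≠ j}) : Fin (m+2)) = i
      · have hval : cc b = k i + k j := by simp [hcc, hc', hbi]
        rw [hval, he]
        exact Int.gcd_dvd_left _ _
      · have hval : cc b = k ((σ b : {l : Fin (m+2) // l ≠ j}) : Fin (m+2)) := by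
          simp [hcc, hc', hbi]
        rw [hval, he]
        refine Dvd.dvd.trans (Int.gcd_dvd_right _ _) ?_
        exact Finset.gcd_dvd (Finset.mem_erase.2 ⟨(σ b).2,
          Finset.mem_erase.2 ⟨hbi, Finset.mem_univ _⟩⟩)
    let TE : torsub A (Finset.univ.gcd cc) ≃+ Te :=
      subEquiv (AddEquiv.refl A) _ _ (fun a => by
        rw [torsub_mem, hTe]
        exact ⟨fun h => smul_zero_of_dvd dA h, fun h => smul_zero_of_dvd dB h⟩)
    exact ⟨Θ.trans (E2.trans (F.trans ((AddEquiv.refl (Fin m → A)).prodCongr TE)))⟩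
  · rintro ⟨h0, hz⟩
    refine le_antisymm inf_le_right (le_inf ?_ le_rfl)
    intro v hv
    rw [hΔ] at hv
    rw [hB]
    have hterm : ∀ l, k l • v l = if l = i then k i • v i else if l = j then k j • v j else 0 := by
      intro l
      by_cases h1 : l = i
      · simp [h1]
      · by_cases h2 : l = j
        · simp [h1, h2, Ne.symm hij]
        · simp [h1, h2, hz l h1 h2]
    rw [Finset.sum_congr rfl (fun l _ => hterm l)]
    rw [Finset.sum_eq_add_of_mem i j (Finset.mem_univ i) (Finset.mem_univ j) hij
      (fun l _ hl => by simp [if_neg hl.1, if_neg hl.2])]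
    simp only [if_pos, if_neg (Ne.symm hij)]
    rw [hv, ← add_smul, h0, zero_smul]
end

section
/- Let T := (ℝ/ℤ)² be the two-dimensional torus, regarded as a topological abelian group. Let n ≥ 1 and let k₁,…,kₙ be integers, not all zero, with Σᵢ kᵢ = 0, and let d be their greatest common divisor. Then the closed subgroup B := {(a₁,…,aₙ) ∈ Tⁿ : Σᵢ kᵢ • aᵢ = 0} has exactly d² connected components. -/
/-- Bézout for `Finset.gcd` over `ℤ`. -/
lemma finset_gcd_bezout {ι : Type*} [DecidableEq ι] (s : Finset ι) (f : ι → ℤ) :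
    ∃ m : ι → ℤ, ∑ i ∈ s, m i * f i = s.gcd f := by
  induction s using Finset.induction_on with
  | empty => exact ⟨0, by simp⟩
  | @insert a s ha ih =>
    obtain ⟨m, hm⟩ := ih
    set A := Int.gcdA (f a) (s.gcd f)
    set Bz := Int.gcdB (f a) (s.gcd f)
    refine ⟨fun i => if i = a then A else m i * Bz, ?_⟩
    rw [Finset.sum_insert ha, Finset.gcd_insert]
    dsimp only
    rw [if_pos rfl]
    have h1 : ∑ i ∈ s, (if i = a then A else m i * Bz) * f i
        = (∑ i ∈ s, m i * f i) * Bz := by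
      rw [Finset.sum_mul]
      refine Finset.sum_congr rfl fun i hi => ?_
      rw [if_neg (by rintro rfl; exact ha hi)]
      ring
    rw [h1, hm, ← Int.coe_gcd, Int.gcd_eq_gcd_ab]
    ring

/-- The `d`-torsion of the circle `ℝ/ℤ` is in bijection with `ZMod d`. -/
noncomputable def torsionEquiv (d : ℕ) [NeZero d] :
    ZMod d ≃ {x : AddCircle (1 : ℝ) // d • x = 0} := by
  refine Equiv.ofBijective (fun j => ⟨ZMod.toAddCircle j, ?_⟩) ⟨?_, ?_⟩
  · rw [← map_nsmul]
    have : (d : ℕ) • j = 0 := by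
      rw [nsmul_eq_mul, ZMod.natCast_self, zero_mul]
    rw [this, map_zero]
  · intro a b hab
    exact ZMod.toAddCircle_injective d (by simpa using congrArg Subtype.val hab)
  · rintro ⟨x, hx⟩
    obtain ⟨r, rfl⟩ : ∃ r : ℝ, (r : AddCircle (1:ℝ)) = x := Quot.exists_rep x
    have h1 : ((d • r : ℝ) : AddCircle (1:ℝ)) = 0 := by
      rw [AddCircle.coe_nsmul]; exact hx
    obtain ⟨mz, hmz⟩ := (AddCircle.coe_eq_zero_iff (1:ℝ)).mp h1
    have hd : (d : ℝ) ≠ 0 := Nat.cast_ne_zero.mpr (NeZero.ne d)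
    refine ⟨(mz : ZMod d), ?_⟩
    apply Subtype.ext
    show ZMod.toAddCircle ((mz : ZMod d)) = _
    rw [ZMod.toAddCircle_intCast]
    congr 1
    have : (mz : ℝ) = d * r := by
      simpa [nsmul_eq_mul] using hmz
    field_simp [this]
    exact this



/-- The two-dimensional torus `(ℝ/ℤ)²`. -/
abbrev Torus2 : Type := AddCircle (1 : ℝ) × AddCircle (1 : ℝ)

/-- **Proposition 4.4 (topological core).** For integers `k₁,…,kₙ`, not all zero, summing
to `0`, with `d = gcd(k₁,…,kₙ)`, the closed subgroup
`B = {(a₁,…,aₙ) ∈ Tⁿ : Σᵢ kᵢ • aᵢ = 0}` of the `n`-th power of the torus `T = (ℝ/ℤ)²`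
has exactly `d²` connected components. -/
theorem stmt2 (n : ℕ) (hn : 1 ≤ n) (k : Fin n → ℤ) (hk : k ≠ 0)
    (hsum : ∑ i, k i = 0) (d : ℕ) (hd : (d : ℤ) = Finset.univ.gcd k) :
    Nat.card (ConnectedComponents {v : Fin n → Torus2 // ∑ i, k i • v i = 0}) = d ^ 2 := by
  classical
  -- d is positive
  have hdpos : 0 < d := by
    rcases Nat.eq_zero_or_pos d with h | h
    · exfalso
      apply hk
      funext i
      exact Finset.gcd_eq_zero_iff.mp
        (by rw [← hd, h, Nat.cast_zero] : Finset.univ.gcd k = 0) i (Finset.mem_univ i)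
    · exact h
  haveI : NeZero d := ⟨hdpos.ne'⟩
  have hdz : (d : ℤ) ≠ 0 := by exact_mod_cast hdpos.ne'
  -- the reduced coefficients k' with gcd 1
  have hdvd : ∀ i, (d : ℤ) ∣ k i := fun i => hd ▸ Finset.gcd_dvd (Finset.mem_univ i)
  set k' : Fin n → ℤ := fun i => k i / d with hk'def
  have hkk' : ∀ i, k i = (d : ℤ) * k' i := fun i => (Int.mul_ediv_cancel' (hdvd i)).symm
  have hgcd' : Finset.univ.gcd k' = 1 := by
    have h1 : Finset.univ.gcd k = (d : ℤ) * Finset.univ.gcd k' := by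
      calc Finset.univ.gcd k = Finset.univ.gcd (fun i => (d : ℤ) * k' i) :=
            Finset.gcd_congr rfl fun i _ => hkk' i
        _ = normalize ((d : ℤ)) * Finset.univ.gcd k' := Finset.gcd_mul_left
        _ = (d : ℤ) * Finset.univ.gcd k' := by
            rw [Int.normalize_of_nonneg (by positivity)]
    have h2 : (d : ℤ) * 1 = (d : ℤ) * Finset.univ.gcd k' := by
      rw [mul_one]; exact hd.trans h1
    exact (mul_left_cancel₀ hdz h2).symm
  -- Bézout coefficients
  obtain ⟨m, hm⟩ := finset_gcd_bezout Finset.univ k'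
  rw [hgcd'] at hm
  have hm' : ∑ i, k' i * m i = 1 := by
    rw [← hm]; exact Finset.sum_congr rfl fun i _ => mul_comm _ _
  -- the covering homomorphism p : ℝ² → T
  set q1 : ℝ →+ AddCircle (1 : ℝ) := QuotientAddGroup.mk' _ with hq1
  set p : ℝ × ℝ →+ Torus2 := q1.prodMap q1 with hp
  have hpcont : Continuous p := by
    have : Continuous q1 := AddCircle.continuous_mk' 1
    exact (this.comp continuous_fst).prodMk (this.comp continuous_snd)
  have hpsurj : Function.Surjective p := by
    intro t
    obtain ⟨r1, h1⟩ := Quot.exists_rep t.1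
    obtain ⟨r2, h2⟩ := Quot.exists_rep t.2
    exact ⟨(r1, r2), Prod.ext h1 h2⟩
  -- the torsion subgroup S and its cardinality
  set S := {t : Torus2 // d • t = 0} with hS
  have htors : ∀ t : Torus2, d • t = 0 ↔ (d • t.1 = 0 ∧ d • t.2 = 0) := by
    intro t; constructor
    · intro h; exact ⟨congrArg Prod.fst h, congrArg Prod.snd h⟩
    · intro h; exact Prod.ext h.1 h.2
  let eS : (ZMod d × ZMod d) ≃ S :=
    ((torsionEquiv d).prodCongr (torsionEquiv d)).trans
      { toFun := fun ab => ⟨(ab.1.1, ab.2.1), (htors _).mpr ⟨ab.1.2, ab.2.2⟩⟩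
        invFun := fun t => (⟨t.1.1, ((htors _).mp t.2).1⟩, ⟨t.1.2, ((htors _).mp t.2).2⟩)
        left_inv := fun ab => rfl
        right_inv := fun t => rfl }
  haveI : Finite S := Finite.of_equiv _ eS
  have hScard : Nat.card S = d ^ 2 := by
    rw [← Nat.card_congr eS, Nat.card_prod, Nat.card_zmod, sq]
  -- the subgroup B (as a subtype X)
  set X := {v : Fin n → Torus2 // ∑ i, k i • v i = 0} with hX
  -- the map to the torsion subgroup
  have hfmem : ∀ v : X, d • (∑ i, k' i • v.1 i) = 0 := by
    intro v
    rw [Finset.smul_sum]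
    have h1 : ∀ i ∈ Finset.univ, d • (k' i • v.1 i) = k i • v.1 i := by
      intro i _
      rw [← natCast_zsmul, smul_smul, ← hkk' i]
    rw [Finset.sum_congr rfl h1]
    exact v.2
  set f : X → S := fun v => ⟨∑ i, k' i • v.1 i, hfmem v⟩ with hf
  have hfcont : Continuous f := by
    apply Continuous.subtype_mk
    exact continuous_finset_sum _ fun i _ =>
      (((continuous_apply i).comp continuous_subtype_val)).zsmul (k' i)
  set g : ConnectedComponents X → S := hfcont.connectedComponentsLift with hg
  -- the lifting lemma
  have key : ∀ w : Fin n → Torus2, (∑ i, k' i • w i) = 0 →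
      ∃ x : Fin n → ℝ × ℝ, (∑ i, k' i • x i) = 0 ∧ ∀ i, p (x i) = w i := by
    intro w hw
    choose y hy using fun i => hpsurj (w i)
    set z : ℝ × ℝ := ∑ i, k' i • y i with hz
    have hpz : p z = 0 := by
      rw [hz, map_sum]
      simp_rw [map_zsmul, hy]
      exact hw
    refine ⟨fun i => y i - m i • z, ?_, fun i => ?_⟩
    · have h1 : ∀ i ∈ Finset.univ, k' i • (y i - m i • z)
          = k' i • y i - (k' i * m i) • z := by
        intro i _; rw [smul_sub, smul_smul]
      rw [Finset.sum_congr rfl h1, Finset.sum_sub_distrib, ← hz, ← Finset.sum_smul,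
        hm', one_zsmul, sub_self]
    · rw [map_sub, map_zsmul, hy, hpz, smul_zero, sub_zero]
  -- injectivity of g
  have hginj : Function.Injective g := by
    intro c1 c2 hc
    obtain ⟨v1, rfl⟩ := ConnectedComponents.surjective_coe c1
    obtain ⟨v2, rfl⟩ := ConnectedComponents.surjective_coe c2
    rw [hg, hfcont.connectedComponentsLift_apply_coe,
      hfcont.connectedComponentsLift_apply_coe] at hc
    have hψ : ∑ i, k' i • v1.1 i = ∑ i, k' i • v2.1 i := congrArg Subtype.val hc
    -- the connected set containing both
    set W : Set (Fin n → ℝ × ℝ) := {x | ∑ i, k' i • x i = 0} with hW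
    have hcast : ∀ (c : ℤ) (u : ℝ × ℝ), c • u = ((c : ℝ)) • u :=
      fun c u => (Int.cast_smul_eq_zsmul ℝ c u).symm
    have hWconv : Convex ℝ W := by
      intro x hx y hy a b ha hb hab
      simp only [hW, Set.mem_setOf_eq] at hx hy ⊢
      simp_rw [hcast] at hx hy ⊢
      simp_rw [Pi.add_apply, Pi.smul_apply, smul_add, smul_comm ((_ : ℝ)) a,
        smul_comm ((_ : ℝ)) b]
      rw [Finset.sum_add_distrib, ← Finset.smul_sum, ← Finset.smul_sum, hx, hy,
        smul_zero, smul_zero, add_zero]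
    have hWpre : IsPreconnected W := hWconv.isPreconnected
    haveI : PreconnectedSpace W := Subtype.preconnectedSpace hWpre
    have hΦmem : ∀ x : W, (∑ i, k i • (v1.1 i + p (x.1 i))) = 0 := by
      intro x
      have h1 : ∀ i ∈ Finset.univ, k i • (v1.1 i + p (x.1 i))
          = k i • v1.1 i + k i • p (x.1 i) := fun i _ => smul_add _ _ _
      rw [Finset.sum_congr rfl h1, Finset.sum_add_distrib, v1.2, zero_add]
      have h2 : ∀ i ∈ Finset.univ, k i • p (x.1 i) = p (k i • x.1 i) :=
        fun i _ => (map_zsmul p _ _).symm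
      rw [Finset.sum_congr rfl h2, ← map_sum]
      have h3 : ∑ i, k i • x.1 i = (0 : ℝ × ℝ) := by
        have h4 : ∀ i ∈ Finset.univ, k i • x.1 i = (d : ℤ) • (k' i • x.1 i) := by
          intro i _; rw [smul_smul, ← hkk' i]
        rw [Finset.sum_congr rfl h4, ← Finset.smul_sum, x.2, smul_zero]
      rw [h3, map_zero]
    set Φ : W → X := fun x => ⟨fun i => v1.1 i + p (x.1 i), hΦmem x⟩ with hΦ
    have hΦcont : Continuous Φ := by
      apply Continuous.subtype_mk
      exact continuous_pi fun i => continuous_const.add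
        (hpcont.comp ((continuous_apply i).comp continuous_subtype_val))
    have hrange : IsPreconnected (Set.range Φ) := isPreconnected_range hΦcont
    have hv1 : v1 ∈ Set.range Φ := by
      refine ⟨⟨0, by simp [hW]⟩, ?_⟩
      apply Subtype.ext
      funext i
      simp [hΦ, map_zero]
    have hv2 : v2 ∈ Set.range Φ := by
      obtain ⟨x, hx0, hxp⟩ := key (fun i => v2.1 i - v1.1 i) (by
        have h1 : ∀ i ∈ Finset.univ, k' i • (v2.1 i - v1.1 i)
            = k' i • v2.1 i - k' i • v1.1 i := fun i _ => smul_sub _ _ _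
        rw [Finset.sum_congr rfl h1, Finset.sum_sub_distrib, hψ, sub_self])
      refine ⟨⟨x, hx0⟩, ?_⟩
      apply Subtype.ext
      funext i
      show v1.1 i + p (x i) = v2.1 i
      rw [hxp i, add_sub_cancel]
    have h12 : (v2 : X) ∈ connectedComponent (v1 : X) :=
      hrange.subset_connectedComponent hv1 hv2
    exact ConnectedComponents.coe_eq_coe.mpr (connectedComponent_eq h12)
  -- surjectivity of g
  have hgsurj : Function.Surjective g := by
    intro t
    have hmem0 : ∑ i, k i • ((fun i => m i • t.1) i) = 0 := by
      have h1 : ∀ i ∈ Finset.univ, k i • (m i • t.1) = ((k' i * m i) : ℤ) • ((d : ℤ) • t.1) := by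
        intro i _
        rw [smul_smul, smul_smul, hkk' i]
        ring_nf
      rw [Finset.sum_congr rfl h1, ← Finset.sum_smul, hm', one_zsmul,
        natCast_zsmul, t.2]
    refine ⟨(⟨fun i => m i • t.1, hmem0⟩ : X), ?_⟩
    rw [hg, hfcont.connectedComponentsLift_apply_coe]
    apply Subtype.ext
    show ∑ i, k' i • (m i • t.1) = t.1
    have h1 : ∀ i ∈ Finset.univ, k' i • (m i • t.1) = (k' i * m i) • t.1 :=
      fun i _ => smul_smul _ _ _
    rw [Finset.sum_congr rfl h1, ← Finset.sum_smul, hm', one_zsmul]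
  rw [Nat.card_eq_of_bijective g ⟨hginj, hgsurj⟩, hScard]
end

section
/- Let T := (ℝ/ℤ)² be the two-dimensional torus and let c₁,…,cₙ be integers, not all zero, with greatest common divisor m. Fix g ∈ T. Then the set C := {(a₁,…,aₙ) ∈ Tⁿ : Σᵢ cᵢ • aᵢ = g} has exactly m² connected components; more precisely, for each of the m² elements g' ∈ T with m • g' = g, the set C_{g'} := {(a₁,…,aₙ) ∈ Tⁿ : Σᵢ (cᵢ/m) • aᵢ = g'} is a nonempty, connected, open and closed subset of C, and these sets partition C. -/
theorem bezout_finset {ι : Type*} [DecidableEq ι] (s : Finset ι) (c : ι → ℤ) :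
    ∃ u : ι → ℤ, ∑ i ∈ s, u i * c i = s.gcd c := by
  induction s using Finset.induction with
  | empty => exact ⟨0, by simp⟩
  | @insert a s ha ih =>
    obtain ⟨u, hu⟩ := ih
    rw [Finset.gcd_insert]
    obtain ⟨A, B, hAB⟩ : ∃ A B : ℤ, (c a) * A + (s.gcd c) * B = GCDMonoid.gcd (c a) (s.gcd c) :=
      ⟨_, _, by rw [← Int.coe_gcd, Int.gcd_eq_gcd_ab]⟩
    refine ⟨fun i => if i = a then A else B * u i, ?_⟩
    have h2 : ∑ i ∈ s, (if i = a then A else B * u i) * c i = B * ∑ i ∈ s, u i * c i := by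
      rw [Finset.mul_sum]
      refine Finset.sum_congr rfl fun i hi => ?_
      rw [if_neg (show i ≠ a by rintro rfl; exact ha hi)]; ring
    rw [Finset.sum_insert ha, h2, hu, ← hAB]; simp; ring

theorem card_msmul_fiber (m : ℕ) (hm : 0 < m) (y : AddCircle (1:ℝ)) :
    Nat.card {x : AddCircle (1:ℝ) // (m:ℤ) • x = y} = m := by
  obtain ⟨t, rfl⟩ : ∃ t : ℝ, (t : AddCircle (1:ℝ)) = y := Quotient.exists_rep y
  have hm0 : ((m:ℤ) : ℤ) ≠ 0 := by exact_mod_cast hm.ne'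
  have key : ∀ r : ℝ, ((m:ℤ) • ((r : AddCircle (1:ℝ))) = (t : AddCircle (1:ℝ))) ↔
      ∃ k : ℤ, (m:ℝ) * r - t = k := by
    intro r
    rw [← AddCircle.coe_zsmul, ← sub_eq_zero, ← AddCircle.coe_sub, AddCircle.coe_eq_zero_iff]
    constructor
    · rintro ⟨k, hk⟩
      simp only [zsmul_eq_mul, smul_eq_mul, mul_one] at hk
      exact ⟨k, by push_cast at hk ⊢; linarith [hk]⟩
    · rintro ⟨k, hk⟩
      refine ⟨k, ?_⟩
      simp only [zsmul_eq_mul, smul_eq_mul, mul_one]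
      push_cast at hk ⊢; linarith [hk]
  let f : Fin m → {x : AddCircle (1:ℝ) // (m:ℤ) • x = (t : AddCircle (1:ℝ))} := fun k =>
    ⟨(((t + k) / m : ℝ) : AddCircle (1:ℝ)), by
      rw [key]; exact ⟨k, by field_simp; push_cast; ring⟩⟩
  have hbij : Function.Bijective f := by
    constructor
    · intro k j hkj
      have h0 : (((t + k) / m : ℝ) : AddCircle (1:ℝ)) = (((t + j) / m : ℝ) : AddCircle (1:ℝ)) := by
        have := congrArg Subtype.val hkj
        simpa [f] using this
      rw [← sub_eq_zero, ← AddCircle.coe_sub, AddCircle.coe_eq_zero_iff] at h0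
      obtain ⟨z, hz⟩ := h0
      simp only [zsmul_eq_mul, smul_eq_mul, mul_one] at hz
      have hz' : (t + k)/m - (t + j)/m = ((k : ℝ) - j)/m := by
        field_simp; ring
      rw [hz'] at hz
      have hmr : (0:ℝ) < m := by exact_mod_cast hm
      have : (z : ℝ) * m = (k:ℝ) - j := by
        field_simp at hz; linarith [hz]
      have hzz : z * (m:ℤ) = (k : ℤ) - (j : ℤ) := by exact_mod_cast this
      have hk' : ((k:ℕ) : ℤ) < m := by exact_mod_cast k.isLt
      have hj' : ((j:ℕ) : ℤ) < m := by exact_mod_cast j.isLt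
      have hk0 : (0:ℤ) ≤ ((k:ℕ) : ℤ) := Int.ofNat_nonneg _
      have hj0 : (0:ℤ) ≤ ((j:ℕ) : ℤ) := Int.ofNat_nonneg _
      have hmz : (0:ℤ) < m := by exact_mod_cast hm
      have hz0 : z = 0 := by
        rcases lt_trichotomy z 0 with h | h | h
        · nlinarith
        · exact h
        · nlinarith
      rw [hz0] at hzz
      simp at hzz
      exact Fin.ext (by omega)
    · rintro ⟨x, hx⟩
      obtain ⟨s, rfl⟩ : ∃ s : ℝ, (s : AddCircle (1:ℝ)) = x := Quotient.exists_rep x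
      obtain ⟨z, hz⟩ := (key s).mp hx
      refine ⟨⟨(z % m).toNat, ?_⟩, ?_⟩
      · have h1 := Int.emod_lt_of_pos z (show (0:ℤ) < m by exact_mod_cast hm)
        have h2 := Int.emod_nonneg z hm0
        omega
      · apply Subtype.ext
        show (((t + (((z % m).toNat : ℕ) : ℝ)) / m : ℝ) : AddCircle (1:ℝ)) = (s : AddCircle (1:ℝ))
        rw [← sub_eq_zero, ← AddCircle.coe_sub, AddCircle.coe_eq_zero_iff]
        refine ⟨-(z / m), ?_⟩
        simp only [zsmul_eq_mul, smul_eq_mul, mul_one]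
        have e1 : ((z % (m:ℤ)).toNat : ℤ) = z % m := Int.toNat_of_nonneg (Int.emod_nonneg z hm0)
        have e2 : (m:ℤ) * (z / m) + z % m = z := Int.mul_ediv_add_emod z (m:ℤ)
        have e3 : ((z % (m:ℤ)).toNat : ℤ) = z - (m:ℤ) * (z / m) := by omega
        have e4 : (((z % (m:ℤ)).toNat : ℕ) : ℝ) = (z:ℝ) - (m:ℝ) * ((z / (m:ℤ) : ℤ) : ℝ) := by
          exact_mod_cast congrArg (Int.cast : ℤ → ℝ) e3
        have hmr : (0:ℝ) < m := by exact_mod_cast hm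
        have hs : s = (t + (z:ℝ)) / m := by field_simp; linarith [hz]
        rw [e4, hs]
        push_cast
        field_simp
        ring
  rw [← Nat.card_eq_of_bijective f hbij, Nat.card_eq_fintype_card, Fintype.card_fin]


noncomputable def torusPi : (ℝ × ℝ) →+ Torus2 :=
  AddMonoidHom.prodMap (QuotientAddGroup.mk' (AddSubgroup.zmultiples (1:ℝ)))
    (QuotientAddGroup.mk' (AddSubgroup.zmultiples (1:ℝ)))

lemma torusPi_continuous : Continuous torusPi := by
  exact (continuous_quotient_mk'.comp continuous_fst).prodMk
    (continuous_quotient_mk'.comp continuous_snd)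

lemma torusPi_surjective : Function.Surjective torusPi := by
  rintro ⟨z₁, z₂⟩
  obtain ⟨a, ha⟩ := Quotient.exists_rep z₁
  obtain ⟨b, hb⟩ := Quotient.exists_rep z₂
  exact ⟨(a, b), Prod.ext ha hb⟩

theorem fiber_pathConnected (n : ℕ) (d u : Fin n → ℤ) (hu : ∑ i, u i * d i = 1) (g' : Torus2) :
    IsPathConnected {a : Fin n → Torus2 | ∑ i, d i • a i = g'} := by
  have hdu : ∑ i, d i * u i = 1 := by rw [← hu]; exact Finset.sum_congr rfl fun i _ => mul_comm _ _
  set x₀ : Fin n → Torus2 := fun i => u i • g' with hx₀def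
  have hx₀ : ∑ i, d i • x₀ i = g' := by
    have : ∀ i, d i • x₀ i = (d i * u i) • g' := fun i => by rw [hx₀def, smul_smul]
    rw [Finset.sum_congr rfl fun i _ => this i, ← Finset.sum_smul, hdu, one_smul]
  refine ⟨x₀, hx₀, ?_⟩
  intro y hy
  -- choose lifts
  choose p hp using fun i => torusPi_surjective (x₀ i)
  choose q hq using fun i => torusPi_surjective (y i)
  set k : ℝ × ℝ := ∑ i, d i • (q i - p i) with hk
  have hπk : torusPi k = 0 := by
    rw [hk, map_sum]
    have : ∀ i, torusPi (d i • (q i - p i)) = d i • y i - d i • x₀ i := by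
      intro i
      rw [map_zsmul, map_sub, hp, hq, smul_sub]
    rw [Finset.sum_congr rfl fun i _ => this i, Finset.sum_sub_distrib, hy, hx₀, sub_self]
  set q' : Fin n → ℝ × ℝ := fun i => q i - u i • k with hq'def
  have hπq' : ∀ i, torusPi (q' i) = y i := by
    intro i
    rw [hq'def]
    simp only
    rw [map_sub, map_zsmul, hπk, smul_zero, sub_zero, hq]
  have hsum0 : ∑ i, d i • (q' i - p i) = 0 := by
    have : ∀ i, d i • (q' i - p i) = d i • (q i - p i) - (d i * u i) • k := by
      intro i
      rw [hq'def]
      simp only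
      rw [sub_right_comm, smul_sub, smul_smul]
    rw [Finset.sum_congr rfl fun i _ => this i, Finset.sum_sub_distrib, ← hk,
      ← Finset.sum_smul, hdu, one_smul, sub_self]
  -- the path
  refine ⟨⟨⟨fun s => fun i => torusPi (p i + (s:ℝ) • (q' i - p i)), ?_⟩, ?_, ?_⟩, ?_⟩
  · refine continuous_pi fun i => torusPi_continuous.comp ?_
    exact continuous_const.add ((continuous_subtype_val).smul continuous_const)
  · funext i
    simp only [Set.Icc.coe_zero, zero_smul, add_zero]
    exact hp i
  · funext i
    simp only [Set.Icc.coe_one, one_smul, add_sub_cancel]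
    exact hπq' i
  · intro s
    show ∑ i, d i • torusPi (p i + (s:ℝ) • (q' i - p i)) = g'
    have : ∀ i, d i • torusPi (p i + (s:ℝ) • (q' i - p i))
        = torusPi (d i • p i + (s:ℝ) • (d i • (q' i - p i))) := by
      intro i
      rw [← map_zsmul, smul_add, smul_comm]
    have e1 : ∑ i, (s:ℝ) • (d i • (q' i - p i)) = (0 : ℝ × ℝ) := by
      rw [← Finset.smul_sum, hsum0, smul_zero]
    rw [Finset.sum_congr rfl fun i _ => this i, ← map_sum, Finset.sum_add_distrib, e1,
      add_zero, map_sum]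
    calc ∑ i, torusPi (d i • p i) = ∑ i, d i • torusPi (p i) :=
          Finset.sum_congr rfl fun i _ => map_zsmul torusPi (d i) (p i)
      _ = ∑ i, d i • x₀ i := Finset.sum_congr rfl fun i _ => by rw [hp]
      _ = g' := hx₀
/-- **Key step of Proposition 4.6.** Let `c₁,…,cₙ` be integers, not all zero, with
`m = gcd(c₁,…,cₙ)`, and fix `g` in the torus `T = (ℝ/ℤ)²`.  Then
`C = {(a₁,…,aₙ) ∈ Tⁿ : Σᵢ cᵢ • aᵢ = g}` has exactly `m²` connected components; more
precisely, for each of the `m²` elements `g'` with `m • g' = g`, the subset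
`C_{g'} = {a : Σᵢ (cᵢ/m) • aᵢ = g'}` of `C` is nonempty, connected, open and closed in
`C`, and these sets partition `C`. -/
theorem stmt3 (n : ℕ) (hn : 1 ≤ n) (c : Fin n → ℤ) (hc : c ≠ 0)
    (m : ℕ) (hm : (m : ℤ) = Finset.univ.gcd c) (g : Torus2)
    (C : Set (Fin n → Torus2)) (hC : C = {a | ∑ i, c i • a i = g})
    (S : Torus2 → Set C)
    (hS : ∀ g' : Torus2, S g' = {x : C | ∑ i, (c i / (m : ℤ)) • (x : Fin n → Torus2) i = g'}) :
    Nat.card {g' : Torus2 // (m : ℤ) • g' = g} = m ^ 2 ∧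
    Nat.card (ConnectedComponents C) = m ^ 2 ∧
    (∀ g' : Torus2, (m : ℤ) • g' = g →
      (S g').Nonempty ∧ IsConnected (S g') ∧ IsOpen (S g') ∧ IsClosed (S g')) ∧
    (∀ g₁ g₂ : Torus2, (m : ℤ) • g₁ = g → (m : ℤ) • g₂ = g → g₁ ≠ g₂ →
      Disjoint (S g₁) (S g₂)) ∧
    (⋃ g' ∈ {g' : Torus2 | (m : ℤ) • g' = g}, S g') = Set.univ := by
  classical
  have hmne : (m : ℤ) ≠ 0 := by
    rw [hm]
    intro h0
    exact hc (funext fun i => Finset.gcd_eq_zero_iff.mp h0 i (Finset.mem_univ i))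
  have hmpos : 0 < m := Nat.pos_of_ne_zero (fun h => hmne (by simp [h]))
  set d : Fin n → ℤ := fun i => c i / (m : ℤ) with hd
  have hcd : ∀ i, c i = (m : ℤ) * d i := fun i =>
    (Int.mul_ediv_cancel' (hm ▸ Finset.gcd_dvd (Finset.mem_univ i))).symm
  -- Bezout
  obtain ⟨u, hu⟩ := bezout_finset Finset.univ c
  rw [← hm] at hu
  have hu1 : ∑ i, u i * d i = 1 := by
    have h1 : ∑ i, u i * c i = (m : ℤ) * ∑ i, u i * d i := by
      rw [Finset.mul_sum]
      exact Finset.sum_congr rfl fun i _ => by rw [hcd i]; ring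
    exact mul_left_cancel₀ hmne (by rw [← h1, hu, mul_one])
  -- φ and its key properties
  set φ : (Fin n → Torus2) → Torus2 := fun a => ∑ i, d i • a i with hφ
  have hφcont : Continuous φ :=
    continuous_finset_sum _ fun i _ => (continuous_zsmul (d i)).comp (continuous_apply i)
  have hsmulφ : ∀ a : Fin n → Torus2, ∑ i, c i • a i = (m : ℤ) • φ a := by
    intro a
    rw [hφ, Finset.smul_sum]
    exact Finset.sum_congr rfl fun i _ => by rw [hcd i, mul_smul]
  have hroot : ∀ x : C, (m : ℤ) • φ (x : Fin n → Torus2) = g := by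
    rintro ⟨a, ha⟩
    rw [hC] at ha
    rw [← hsmulφ]
    exact ha
  have hSφ : ∀ (g' : Torus2) (x : C), x ∈ S g' ↔ φ (x : Fin n → Torus2) = g' := by
    intro g' x
    rw [hS g']
    exact Iff.rfl
  -- fibers in the ambient space
  set F : Torus2 → Set (Fin n → Torus2) := fun g' => {a | φ a = g'} with hF
  have hpc : ∀ g', IsPathConnected (F g') := fun g' => fiber_pathConnected n d u hu1 g'
  have hFC : ∀ g', (m : ℤ) • g' = g → F g' ⊆ C := by
    intro g' hg' a ha
    rw [hC]
    show ∑ i, c i • a i = g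
    rw [hsmulφ, ha]
    exact hg'
  have hSF : ∀ g', S g' = Subtype.val ⁻¹' F g' := by
    intro g'
    ext x
    rw [hSφ]
    exact Iff.rfl
  -- closedness (for all g')
  have hclosed : ∀ g', IsClosed (S g') := by
    intro g'
    rw [hSF]
    exact (IsClosed.preimage (hφcont.comp continuous_subtype_val) isClosed_singleton)
  -- the root set is finite
  have hfib : ∀ y : AddCircle (1:ℝ), Finite {x : AddCircle (1:ℝ) // (m:ℤ) • x = y} := by
    intro y
    apply Nat.finite_of_card_ne_zero
    rw [card_msmul_fiber m hmpos y]
    exact hmpos.ne'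
  have heqv : {g' : Torus2 // (m : ℤ) • g' = g} ≃
      {x : AddCircle (1:ℝ) // (m:ℤ) • x = g.1} × {x : AddCircle (1:ℝ) // (m:ℤ) • x = g.2} := by
    refine ⟨fun g' => (⟨g'.1.1, ?_⟩, ⟨g'.1.2, ?_⟩), fun p => ⟨(p.1.1, p.2.1), ?_⟩, ?_, ?_⟩
    · exact congrArg Prod.fst g'.2
    · exact congrArg Prod.snd g'.2
    · exact Prod.ext p.1.2 p.2.2
    · intro g'; rfl
    · intro p; rfl
  have hcard1 : Nat.card {g' : Torus2 // (m : ℤ) • g' = g} = m ^ 2 := by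
    rw [Nat.card_congr heqv, Nat.card_prod, card_msmul_fiber m hmpos,
      card_msmul_fiber m hmpos, sq]
  have hRfin : Finite {g' : Torus2 // (m : ℤ) • g' = g} := by
    apply Nat.finite_of_card_ne_zero
    rw [hcard1]
    positivity
  -- nonempty and connected
  have hne : ∀ g', (m : ℤ) • g' = g → (S g').Nonempty := by
    intro g' hg'
    obtain ⟨a, ha, -⟩ := hpc g'
    exact ⟨⟨a, hFC g' hg' ha⟩, (hSφ g' _).mpr ha⟩
  have hconn : ∀ g', (m : ℤ) • g' = g → IsConnected (S g') := by
    intro g' hg'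
    have h1 : ConnectedSpace ↥(F g') := isConnected_iff_connectedSpace.mp (hpc g').isConnected
    have h2 : IsConnected (Set.range (Set.inclusion (hFC g' hg'))) :=
      isConnected_range (continuous_inclusion (hFC g' hg'))
    rw [Set.range_inclusion] at h2
    rw [hSF]
    exact h2
  -- disjointness
  have hdisj : ∀ g₁ g₂ : Torus2, g₁ ≠ g₂ → Disjoint (S g₁) (S g₂) := by
    intro g₁ g₂ hne12
    rw [Set.disjoint_left]
    intro x hx1 hx2
    exact hne12 (((hSφ g₁ x).mp hx1).symm.trans ((hSφ g₂ x).mp hx2))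
  -- covering
  have hcover : (⋃ g' ∈ {g' : Torus2 | (m : ℤ) • g' = g}, S g') = Set.univ := by
    ext x
    simp only [Set.mem_iUnion, Set.mem_univ, iff_true, Set.mem_setOf_eq]
    exact ⟨φ (x : Fin n → Torus2), hroot x, (hSφ _ x).mpr rfl⟩
  -- openness
  have hopen : ∀ g', (m : ℤ) • g' = g → IsOpen (S g') := by
    intro g₁ hg₁
    rw [← isClosed_compl_iff]
    have hcompl : (S g₁)ᶜ = ⋃ g' ∈ {g' : Torus2 | (m : ℤ) • g' = g ∧ g' ≠ g₁}, S g' := by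
      ext x
      simp only [Set.mem_compl_iff, Set.mem_iUnion, Set.mem_setOf_eq]
      constructor
      · intro hx
        refine ⟨φ (x : Fin n → Torus2), ⟨hroot x, ?_⟩, (hSφ _ x).mpr rfl⟩
        intro h
        exact hx ((hSφ g₁ x).mpr h)
      · rintro ⟨g', ⟨-, hne'⟩, hx⟩ hx1
        exact hne' (((hSφ g' x).mp hx).symm.trans ((hSφ g₁ x).mp hx1))
    rw [hcompl]
    have hfin : Set.Finite {g' : Torus2 | (m : ℤ) • g' = g ∧ g' ≠ g₁} := by
      have : Set.Finite {g' : Torus2 | (m : ℤ) • g' = g} := Set.finite_coe_iff.mp hRfin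
      exact this.subset fun x hx => hx.1
    exact hfin.isClosed_biUnion fun g' _ => hclosed g'
  -- connected components count
  have hcard2 : Nat.card (ConnectedComponents C) = m ^ 2 := by
    have hchoice : ∀ g' : {g' : Torus2 // (m : ℤ) • g' = g}, ∃ x : C, x ∈ S g'.1 :=
      fun g' => hne g'.1 g'.2
    choose pt hpt using hchoice
    have hbij : Function.Bijective
        (fun g' : {g' : Torus2 // (m : ℤ) • g' = g} => ConnectedComponents.mk (pt g')) := by
      constructor
      · intro g₁ g₂ h12
        rw [ConnectedComponents.coe_eq_coe] at h12
        have hsub : connectedComponent (pt g₁) ⊆ S g₁.1 :=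
          IsClopen.connectedComponent_subset ⟨hclosed g₁.1, hopen g₁.1 g₁.2⟩ (hpt g₁)
        have h2 : pt g₂ ∈ S g₁.1 := hsub (h12 ▸ mem_connectedComponent)
        exact Subtype.ext (((hSφ g₁.1 _).mp h2).symm.trans ((hSφ g₂.1 _).mp (hpt g₂)))
      · intro q
        obtain ⟨x, rfl⟩ := ConnectedComponents.surjective_coe q
        refine ⟨⟨φ (x : Fin n → Torus2), hroot x⟩, ?_⟩
        rw [ConnectedComponents.coe_eq_coe]
        have hxS : x ∈ S (φ (x : Fin n → Torus2)) := (hSφ _ x).mpr rfl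
        have hconn' := hconn (φ (x : Fin n → Torus2)) (hroot x)
        have hsub : S (φ (x : Fin n → Torus2)) ⊆ connectedComponent x :=
          hconn'.isPreconnected.subset_connectedComponent hxS
        exact (connectedComponent_eq (hsub (hpt ⟨φ (x : Fin n → Torus2), hroot x⟩))).symm
    rw [← Nat.card_eq_of_bijective _ hbij, hcard1]
  exact ⟨hcard1, hcard2, fun g' hg' => ⟨hne g' hg', hconn g' hg', hopen g' hg', hclosed g'⟩,
    fun g₁ g₂ _ _ h12 => hdisj g₁ g₂ h12, hcover⟩
end

section
/- Let d ≥ 1 be an integer. Consider the action of SL(2,ℤ) on (ℤ/dℤ)² given by reducing matrix entries modulo d and applying matrix–vector multiplication. If v, w ∈ (ℤ/dℤ)² have the same additive order, then there exists A ∈ SL(2,ℤ) with A·v = w. -/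
open Matrix

lemma sl2_reduce (a b : ℤ) :
    ∃ A : Matrix.SpecialLinearGroup (Fin 2) ℤ,
      (A : Matrix (Fin 2) (Fin 2) ℤ).mulVec ![a, b] = ![(Int.gcd a b : ℤ), 0] := by
  by_cases h0 : a = 0 ∧ b = 0
  · refine ⟨1, ?_⟩
    obtain ⟨rfl, rfl⟩ := h0
    funext i
    fin_cases i <;> simp [Matrix.mulVec, dotProduct, Fin.sum_univ_two]
  · have hg : (Int.gcd a b : ℤ) ≠ 0 := by
      simp only [ne_eq, Int.natCast_eq_zero, Int.gcd_eq_zero_iff]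
      tauto
    set g : ℤ := (Int.gcd a b : ℤ) with hgdef
    obtain ⟨a', ha'⟩ : g ∣ a := Int.gcd_dvd_left a b
    obtain ⟨b', hb'⟩ : g ∣ b := Int.gcd_dvd_right a b
    set x := Int.gcdA a b
    set y := Int.gcdB a b
    have hbez : g = a * x + b * y := Int.gcd_eq_gcd_ab a b
    have key : a' * x + b' * y = 1 := by
      have : g * (a' * x + b' * y) = g * 1 := by
        rw [mul_one]; nth_rewrite 2 [hbez]; rw [ha', hb']; ring
      exact mul_left_cancel₀ hg this
    refine ⟨⟨!![x, y; -b', a'], by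
      rw [Matrix.det_fin_two_of]; linarith [key]⟩, ?_⟩
    funext i
    fin_cases i <;>
      simp [Matrix.mulVec, dotProduct, Fin.sum_univ_two] <;>
      rw [ha', hb'] <;> nlinarith [key, hbez]

lemma sl2_unit (d : ℕ) (u : ℤ) (hu : IsCoprime u (d : ℤ)) (g : ZMod d) :
    ∃ A : Matrix.SpecialLinearGroup (Fin 2) ℤ,
      ((A : Matrix (Fin 2) (Fin 2) ℤ).map (Int.cast : ℤ → ZMod d)).mulVec ![g, 0]
        = ![(u : ZMod d) * g, 0] := by
  obtain ⟨x, y, hxy⟩ := hu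
  refine ⟨⟨!![u, -y; d, x], by rw [Matrix.det_fin_two_of]; linarith⟩, ?_⟩
  funext i
  fin_cases i <;>
    simp [Matrix.mulVec, dotProduct, Fin.sum_univ_two, ZMod.natCast_self]


lemma exists_unit_mul (d : ℕ) (hd : d ≠ 0) (x y : ZMod d)
    (h : addOrderOf x = addOrderOf y) :
    ∃ u : ℤ, IsCoprime u (d : ℤ) ∧ (u : ZMod d) * x = y := by
  haveI : NeZero d := ⟨hd⟩
  set a := x.val with hadef
  set b := y.val with hbdef
  have hx : (a : ZMod d) = x := ZMod.natCast_rightInverse x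
  have hy : (b : ZMod d) = y := ZMod.natCast_rightInverse y
  have hoa : addOrderOf x = d / d.gcd a := by rw [← hx]; exact ZMod.addOrderOf_coe a hd
  have hob : addOrderOf y = d / d.gcd b := by rw [← hy]; exact ZMod.addOrderOf_coe b hd
  set e := d.gcd a with hedef
  set e' := d.gcd b with he'def
  have hed : e ∣ d := Nat.gcd_dvd_left d a
  have he'd : e' ∣ d := Nat.gcd_dvd_left d b
  have hee' : e = e' := by
    have h1 : d / (d / e) = e := Nat.div_div_self hed hd
    have h2 : d / (d / e') = e' := Nat.div_div_self he'd hd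
    rw [← h1, ← h2, ← hoa, ← hob, h]
  set n := d / e with hndef
  have hne : e * n = d := Nat.mul_div_cancel' hed
  have hn0 : n ≠ 0 := by
    intro hn; rw [hn, mul_zero] at hne; exact hd hne.symm
  haveI : NeZero n := ⟨hn0⟩
  have he0 : e ≠ 0 := by
    intro hez; rw [hez, zero_mul] at hne; exact hd hne.symm
  obtain ⟨k, hk⟩ : e ∣ a := Nat.gcd_dvd_right d a
  obtain ⟨k', hk'⟩ : e' ∣ b := Nat.gcd_dvd_right d b
  have hne' : e' * n = d := by rw [← hee']; exact hne
  have hkcop : Nat.Coprime k n := by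
    have hga : e * Nat.gcd n k = e * 1 := by
      rw [mul_one, ← Nat.gcd_mul_left, ← hk, hne]
    have : Nat.Coprime n k := Nat.eq_of_mul_eq_mul_left (Nat.pos_of_ne_zero he0) hga
    exact Nat.coprime_comm.mp this
  have hk'cop : Nat.Coprime k' n := by
    have he'0 : e' ≠ 0 := by rw [← hee']; exact he0
    have hga : e' * Nat.gcd n k' = e' * 1 := by
      rw [mul_one, ← Nat.gcd_mul_left, ← hk', hne']
    have : Nat.Coprime n k' := Nat.eq_of_mul_eq_mul_left (Nat.pos_of_ne_zero he'0) hga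
    exact Nat.coprime_comm.mp this
  -- units mod n
  let K : (ZMod n)ˣ := ZMod.unitOfCoprime k hkcop
  let K' : (ZMod n)ˣ := ZMod.unitOfCoprime k' hk'cop
  obtain ⟨V, hV⟩ := ZMod.unitsMap_surjective (n := n) (Nat.div_dvd_of_dvd hed) (K' * K⁻¹)
  set m := (V : ZMod d).val with hmdef
  have hmcop : Nat.Coprime m d := ZMod.val_coe_unit_coprime V
  refine ⟨(m : ℤ), ?_, ?_⟩
  · exact Int.isCoprime_iff_gcd_eq_one.mpr (by simpa [Int.gcd] using hmcop)
  · -- (m : ZMod n) = K' * K⁻¹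
    have hcast : ((m : ZMod n)) = ((K' * K⁻¹ : (ZMod n)ˣ) : ZMod n) := by
      have := congrArg (fun u : (ZMod n)ˣ => (u : ZMod n)) hV
      simp only [ZMod.unitsMap_def, Units.coe_map, MonoidHom.coe_coe] at this
      rw [← this, ZMod.castHom_apply, hmdef, ZMod.natCast_val]
    have hmk : ((m * k : ℕ) : ZMod n) = ((k' : ℕ) : ZMod n) := by
      push_cast
      rw [hcast]
      have : ((K' * K⁻¹ : (ZMod n)ˣ) : ZMod n) * ((K : (ZMod n)ˣ) : ZMod n)
          = ((K' : (ZMod n)ˣ) : ZMod n) := by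
        rw [← Units.val_mul, mul_assoc, inv_mul_cancel, mul_one]
      simpa [K, K', ZMod.coe_unitOfCoprime] using this
    have hmod : (m * k) % n = k' % n := (ZMod.natCast_eq_natCast_iff _ _ _).mp hmk
    have hMOD : Nat.ModEq n (m * k) k' := hmod
    have hMODd : Nat.ModEq d (e * (m * k)) (e * k') := by
      have := hMOD.mul_left' (c := e)
      rwa [hne] at this
    have : ((m * a : ℕ) : ZMod d) = ((b : ℕ) : ZMod d) := by
      rw [ZMod.natCast_eq_natCast_iff]
      calc m * a = e * (m * k) := by rw [hk]; ring
        _ ≡ e * k' [MOD d] := hMODd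
        _ = b := by rw [hk', hee']
    push_cast at this
    rw [hx, hy] at this
    exact_mod_cast this

open Matrix

private def castMap (d : ℕ) (A : Matrix.SpecialLinearGroup (Fin 2) ℤ) :
    Matrix (Fin 2) (Fin 2) (ZMod d) :=
  (A : Matrix (Fin 2) (Fin 2) ℤ).map (Int.cast : ℤ → ZMod d)

private lemma castMap_eq (d : ℕ) (A : Matrix.SpecialLinearGroup (Fin 2) ℤ) :
    castMap d A = (Int.castRingHom (ZMod d)).mapMatrix (A : Matrix (Fin 2) (Fin 2) ℤ) := rfl

private lemma castMap_mul (d : ℕ) (A B : Matrix.SpecialLinearGroup (Fin 2) ℤ) :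
    castMap d (A * B) = castMap d A * castMap d B := by
  simp only [castMap_eq, Matrix.SpecialLinearGroup.coe_mul]
  exact _root_.map_mul ((Int.castRingHom (ZMod d)).mapMatrix) _ _

private lemma castMap_one (d : ℕ) : castMap d 1 = 1 := by
  simp only [castMap_eq, Matrix.SpecialLinearGroup.coe_one]
  exact _root_.map_one ((Int.castRingHom (ZMod d)).mapMatrix)

private lemma act_inv_act (d : ℕ) (A : Matrix.SpecialLinearGroup (Fin 2) ℤ)
    (v : Fin 2 → ZMod d) : (castMap d A⁻¹).mulVec ((castMap d A).mulVec v) = v := by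
  rw [Matrix.mulVec_mulVec, ← castMap_mul, inv_mul_cancel, castMap_one, Matrix.one_mulVec]

private def actHom (d : ℕ) (A : Matrix.SpecialLinearGroup (Fin 2) ℤ) :
    (Fin 2 → ZMod d) →+ (Fin 2 → ZMod d) where
  toFun := (castMap d A).mulVec
  map_zero' := Matrix.mulVec_zero _
  map_add' x y := Matrix.mulVec_add _ x y

private lemma actHom_apply (d : ℕ) (A : Matrix.SpecialLinearGroup (Fin 2) ℤ)
    (v : Fin 2 → ZMod d) : actHom d A v = (castMap d A).mulVec v := rfl

private lemma addOrderOf_act (d : ℕ) (A : Matrix.SpecialLinearGroup (Fin 2) ℤ)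
    (v : Fin 2 → ZMod d) : addOrderOf ((castMap d A).mulVec v) = addOrderOf v := by
  have hinj : Function.Injective (actHom d A) := by
    intro x y hxy
    have := congrArg (castMap d A⁻¹).mulVec hxy
    simpa only [actHom_apply, act_inv_act] using this
  have := addOrderOf_injective (actHom d A) hinj v
  rwa [actHom_apply] at this

private lemma addOrderOf_pair (d : ℕ) (x : ZMod d) :
    addOrderOf (![x, 0] : Fin 2 → ZMod d) = addOrderOf x := by
  have hsingle : (![x, 0] : Fin 2 → ZMod d) = (Pi.single (0 : Fin 2) x : Fin 2 → ZMod d) := by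
    funext i; fin_cases i <;> simp [Pi.single, Function.update]
  rw [hsingle]
  exact addOrderOf_injective (AddMonoidHom.single (fun _ : Fin 2 => ZMod d) 0)
    (fun a b hab => by simpa using congrFun hab 0) x

/-- **Group-theoretic input to Proposition 4.4.** Let `d ≥ 1`.  `SL(2,ℤ)` acts on
`(ℤ/dℤ)²` by reducing matrix entries mod `d` and applying matrix–vector multiplication.
If `v, w ∈ (ℤ/dℤ)²` have the same additive order, then some `A ∈ SL(2,ℤ)` sends `v`
to `w`. -/
theorem stmt4 (d : ℕ) (hd : 1 ≤ d) (v w : Fin 2 → ZMod d)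
    (h : addOrderOf v = addOrderOf w) :
    ∃ A : Matrix.SpecialLinearGroup (Fin 2) ℤ,
      ((A : Matrix (Fin 2) (Fin 2) ℤ).map (Int.cast : ℤ → ZMod d)).mulVec v = w := by
  have hd0 : d ≠ 0 := Nat.one_le_iff_ne_zero.mp hd
  haveI : NeZero d := ⟨hd0⟩
  have lift : ∀ z : Fin 2 → ZMod d, ∃ (A : Matrix.SpecialLinearGroup (Fin 2) ℤ) (g : ℕ),
      (castMap d A).mulVec z = ![(g : ZMod d), 0] := by
    intro z
    set a : ℤ := ((z 0).val : ℤ) with hadef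
    set b : ℤ := ((z 1).val : ℤ) with hbdef
    obtain ⟨A, hA⟩ := sl2_reduce a b
    refine ⟨A, Int.gcd a b, ?_⟩
    have hz : (Int.cast : ℤ → ZMod d) ∘ ![a, b] = z := by
      funext j
      fin_cases j
      · show ((a : ℤ) : ZMod d) = z 0
        rw [hadef]; push_cast; exact ZMod.natCast_rightInverse _
      · show ((b : ℤ) : ZMod d) = z 1
        rw [hbdef]; push_cast; exact ZMod.natCast_rightInverse _
    funext i
    calc (castMap d A *ᵥ z) i
        = ((A : Matrix (Fin 2) (Fin 2) ℤ).map (Int.cast : ℤ → ZMod d) *ᵥ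
            ((Int.cast : ℤ → ZMod d) ∘ ![a, b])) i := by rw [hz]; rfl
      _ = (Int.cast : ℤ → ZMod d) (((A : Matrix (Fin 2) (Fin 2) ℤ) *ᵥ ![a, b]) i) :=
          (RingHom.map_mulVec (Int.castRingHom (ZMod d)) _ _ i).symm
      _ = ![((Int.gcd a b : ℕ) : ZMod d), 0] i := by
          rw [hA]; fin_cases i <;> simp
  obtain ⟨A, g, hA⟩ := lift v
  obtain ⟨B, g', hB⟩ := lift w
  have horder : addOrderOf ((g : ZMod d)) = addOrderOf ((g' : ZMod d)) := by
    rw [← addOrderOf_pair d (g : ZMod d), ← addOrderOf_pair d (g' : ZMod d), ← hA, ← hB,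
      addOrderOf_act, addOrderOf_act, h]
  obtain ⟨u, hu, hug⟩ := exists_unit_mul d hd0 _ _ horder
  obtain ⟨C, hC⟩ := sl2_unit d u hu (g : ZMod d)
  have hC2 : (castMap d C).mulVec ![(g : ZMod d), 0] = ![(g' : ZMod d), 0] := by
    have : (castMap d C).mulVec ![(g : ZMod d), 0] = ![(u : ZMod d) * (g : ZMod d), 0] := hC
    rw [this, hug]
  refine ⟨B⁻¹ * (C * A), ?_⟩
  show (castMap d (B⁻¹ * (C * A))).mulVec v = w
  rw [castMap_mul, castMap_mul, ← Matrix.mulVec_mulVec, ← Matrix.mulVec_mulVec, hA, hC2,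
    ← hB, act_inv_act]
end

section
/- Let e and k be coprime positive integers and let p ∈ ℚ[X]. Then X^k − 1 divides p·(X^e − 1) in ℚ[X] if and only if Σ_{i=0}^{k−1} Xⁱ (that is, (X^k − 1)/(X − 1)) divides p. -/
open Polynomial

/-- **From the proof of Lemma 11.3.** Let `e` and `k` be coprime positive integers and
`p ∈ ℚ[X]`.  Then `X^k − 1` divides `p·(X^e − 1)` if and only if
`Σ_{i=0}^{k−1} Xⁱ = (X^k − 1)/(X − 1)` divides `p`. -/
theorem stmt7 (e k : ℕ) (he : 0 < e) (hk : 0 < k) (hek : Nat.Coprime e k)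
    (p : Polynomial ℚ) :
    ((X : Polynomial ℚ) ^ k - 1) ∣ p * (X ^ e - 1) ↔
      (∑ i ∈ Finset.range k, (X : Polynomial ℚ) ^ i) ∣ p := by
  have hS : (∏ d ∈ (Nat.divisors k).erase 1, cyclotomic d ℚ)
      = ∑ i ∈ Finset.range k, (X : Polynomial ℚ) ^ i :=
    prod_cyclotomic_eq_geom_sum hk ℚ
  have hE : (∏ d ∈ Nat.divisors e, cyclotomic d ℚ) = (X : Polynomial ℚ) ^ e - 1 :=
    prod_cyclotomic_eq_X_pow_sub_one he ℚ
  have hcop : IsCoprime (∑ i ∈ Finset.range k, (X : Polynomial ℚ) ^ i)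
      ((X : Polynomial ℚ) ^ e - 1) := by
    rw [← hS, ← hE]
    apply IsCoprime.prod_left
    intro d hd
    apply IsCoprime.prod_right
    intro d' hd'
    apply cyclotomic.isCoprime_rat
    rintro rfl
    simp only [Finset.mem_erase, Nat.mem_divisors, Finset.mem_singleton] at hd hd'
    have h1 : d ∣ Nat.gcd e k := Nat.dvd_gcd hd'.1 hd.2.1
    rw [Nat.Coprime] at hek
    rw [hek] at h1
    exact hd.1 (Nat.eq_one_of_dvd_one h1)
  have hfac : (∑ i ∈ Finset.range k, (X : Polynomial ℚ) ^ i) * (X - 1)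
      = (X : Polynomial ℚ) ^ k - 1 := geom_sum_mul X k
  constructor
  · intro h
    have hSd : (∑ i ∈ Finset.range k, (X : Polynomial ℚ) ^ i) ∣ p * (X ^ e - 1) :=
      dvd_trans ⟨X - 1, hfac.symm⟩ h
    exact hcop.dvd_of_dvd_mul_right hSd
  · intro h
    rw [← hfac]
    have hx : ((X : Polynomial ℚ) - 1) ∣ X ^ e - 1 := by
      simpa using sub_dvd_pow_sub_pow (X : Polynomial ℚ) 1 e
    exact mul_dvd_mul h hx
end

section
/- Let a, b, k be positive integers, let e := gcd(a, b), and assume gcd(e, k) = 1. Consider the ℚ[X]-module map Φ : ℚ[X]² → ℚ[X]/(X^k − 1) sending (p, q) to the residue class of p·(X^a − 1) + q·(X^b − 1). Then the kernel of Φ is the ℚ[X]-submodule of ℚ[X]² generated by the three elements ( Σ_{i=0}^{b/e − 1} X^{ie} , − Σ_{i=0}^{a/e − 1} X^{ie} ), ( Σ_{i=0}^{k−1} Xⁱ , 0 ), and ( 0 , Σ_{i=0}^{k−1} Xⁱ ). -/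
open Polynomial

lemma myCoprimeAux (m n d : ℕ) (hm : 0 < m) (hn : 0 < n) (hd : Nat.gcd m n = d) :
    IsCoprime (∑ i ∈ Finset.range (m / d), (X : Polynomial ℚ) ^ (i * d))
      (∑ i ∈ Finset.range (n / d), (X : Polynomial ℚ) ^ (i * d)) := by
  have hd0 : 0 < d := hd ▸ Nat.gcd_pos_of_pos_left _ hm
  have hdm : d ∣ m := hd ▸ Nat.gcd_dvd_left m n
  have hdn : d ∣ n := hd ▸ Nat.gcd_dvd_right m n
  rw [Polynomial.isCoprime_iff_aeval_ne_zero_of_isAlgClosed ℚ ℂ]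
  intro z
  by_contra hcon
  push_neg at hcon
  obtain ⟨h1, h2⟩ := hcon
  have ev : ∀ N : ℕ, (aeval z (∑ i ∈ Finset.range N, (X : Polynomial ℚ) ^ (i * d)) : ℂ)
      = ∑ i ∈ Finset.range N, (z ^ d) ^ i := by
    intro N
    simp [← pow_mul']
  have key : ∀ N : ℕ,
      (aeval z (∑ i ∈ Finset.range N, (X : Polynomial ℚ) ^ (i * d)) : ℂ) = 0 →
      (z ^ d) ^ N = 1 := by
    intro N h0
    have h := geom_sum_mul (z ^ d) N
    rw [ev] at h0
    rw [h0, zero_mul] at h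
    exact (sub_eq_zero.mp h.symm)
  have hzm : z ^ m = 1 := by
    have := key (m / d) h1
    rwa [← pow_mul, Nat.mul_div_cancel' hdm] at this
  have hzn : z ^ n = 1 := by
    have := key (n / d) h2
    rwa [← pow_mul, Nat.mul_div_cancel' hdn] at this
  have hzd : z ^ d = 1 := by
    have h3 : orderOf z ∣ d := hd ▸ Nat.dvd_gcd (orderOf_dvd_of_pow_eq_one hzm)
      (orderOf_dvd_of_pow_eq_one hzn)
    exact orderOf_dvd_iff_pow_eq_one.mp h3
  rw [ev, hzd] at h1
  simp only [one_pow, Finset.sum_const, Finset.card_range, nsmul_eq_mul, mul_one] at h1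
  exact (Nat.cast_ne_zero (R := ℂ)).mpr (Nat.div_pos (Nat.le_of_dvd hm hdm) hd0).ne' h1

/-- **From the proof of Lemma 11.3.** Let `a, b, k` be positive integers,
`e = gcd(a, b)`, with `gcd(e, k) = 1`, and let
`Φ : ℚ[X]² → ℚ[X]/(X^k − 1)` be the `ℚ[X]`-module map
`(p, q) ↦ [p·(X^a − 1) + q·(X^b − 1)]`.  Then the kernel of `Φ` is generated by the
three elements `(Σ_{i<b/e} X^{ie}, −Σ_{i<a/e} X^{ie})`, `(Σ_{i<k} Xⁱ, 0)`, and
`(0, Σ_{i<k} Xⁱ)`. -/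
theorem stmt8 (a b k : ℕ) (ha : 0 < a) (hb : 0 < b) (hk : 0 < k)
    (e : ℕ) (he : e = Nat.gcd a b) (hek : Nat.Coprime e k)
    (Φ : (Polynomial ℚ × Polynomial ℚ) →ₗ[Polynomial ℚ]
      (Polynomial ℚ ⧸ Ideal.span {(X : Polynomial ℚ) ^ k - 1}))
    (hΦ : ∀ p q : Polynomial ℚ,
      Φ (p, q) = Ideal.Quotient.mk (Ideal.span {(X : Polynomial ℚ) ^ k - 1})
        (p * (X ^ a - 1) + q * (X ^ b - 1))) :
    LinearMap.ker Φ = Submodule.span (Polynomial ℚ)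
      {(∑ i ∈ Finset.range (b / e), (X : Polynomial ℚ) ^ (i * e),
        -∑ i ∈ Finset.range (a / e), (X : Polynomial ℚ) ^ (i * e)),
       (∑ i ∈ Finset.range k, (X : Polynomial ℚ) ^ i, 0),
       (0, ∑ i ∈ Finset.range k, (X : Polynomial ℚ) ^ i)} := by
  have hea : e ∣ a := he ▸ Nat.gcd_dvd_left a b
  have heb : e ∣ b := he ▸ Nat.gcd_dvd_right a b
  have he0 : 0 < e := he ▸ Nat.gcd_pos_of_pos_left _ ha
  set A : Polynomial ℚ := ∑ i ∈ Finset.range (a / e), (X : Polynomial ℚ) ^ (i * e) with hAdef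
  set B : Polynomial ℚ := ∑ i ∈ Finset.range (b / e), (X : Polynomial ℚ) ^ (i * e) with hBdef
  set s : Polynomial ℚ := ∑ i ∈ Finset.range k, (X : Polynomial ℚ) ^ i with hsdef
  have key : ∀ N : ℕ, (∑ i ∈ Finset.range N, (X : Polynomial ℚ) ^ (i * e)) *
      ((X : Polynomial ℚ) ^ e - 1) = X ^ (N * e) - 1 := by
    intro N
    have h := geom_sum_mul ((X : Polynomial ℚ) ^ e) N
    simpa only [← pow_mul'] using h
  have hA : A * ((X : Polynomial ℚ) ^ e - 1) = X ^ a - 1 := by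
    rw [hAdef, key, Nat.div_mul_cancel hea]
  have hB : B * ((X : Polynomial ℚ) ^ e - 1) = X ^ b - 1 := by
    rw [hBdef, key, Nat.div_mul_cancel heb]
  have hs : s * ((X : Polynomial ℚ) - 1) = X ^ k - 1 := geom_sum_mul X k
  have hg : (∑ i ∈ Finset.range e, (X : Polynomial ℚ) ^ i) * (X - 1) = X ^ e - 1 :=
    geom_sum_mul X e
  have hcopAB : IsCoprime A B := myCoprimeAux a b e ha hb he.symm
  have hcopgs : IsCoprime (∑ i ∈ Finset.range e, (X : Polynomial ℚ) ^ i) s := by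
    have := myCoprimeAux e k 1 he0 hk hek
    simpa using this
  have hX1 : ((X : Polynomial ℚ) - 1) ≠ 0 := by
    intro h
    have := congrArg (eval 0) h
    simp at this
  have hBne : B ≠ 0 := by
    intro h
    have h2 := congrArg (eval 1) h
    rw [hBdef] at h2
    simp only [eval_finset_sum, eval_pow, eval_X, one_pow, Finset.sum_const,
      Finset.card_range, nsmul_eq_mul, mul_one, eval_zero] at h2
    exact (Nat.div_pos (Nat.le_of_dvd hb heb) he0).ne' (Nat.cast_eq_zero.mp h2)
  have hker : ∀ p q : Polynomial ℚ, Φ (p, q) = 0 ↔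
      ((X : Polynomial ℚ) ^ k - 1) ∣ (p * (X ^ a - 1) + q * (X ^ b - 1)) := by
    intro p q
    rw [hΦ, Ideal.Quotient.eq_zero_iff_mem, Ideal.mem_span_singleton]
  apply le_antisymm
  · -- ker ≤ span
    rintro ⟨p, q⟩ hx
    rw [LinearMap.mem_ker, hker] at hx
    obtain ⟨c, hc⟩ := hx
    -- hc : p*(X^a-1) + q*(X^b-1) = (X^k-1)*c
    rw [← hA, ← hB, ← hs, ← hg] at hc
    have hcc : ((p * A + q * B) * (∑ i ∈ Finset.range e, (X : Polynomial ℚ) ^ i)) * (X - 1)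
        = (s * c) * (X - 1) := by linear_combination hc
    have hsg : s ∣ (p * A + q * B) * (∑ i ∈ Finset.range e, (X : Polynomial ℚ) ^ i) :=
      ⟨c, mul_right_cancel₀ hX1 hcc⟩
    have hsdvd : s ∣ p * A + q * B := (hcopgs.symm).dvd_of_dvd_mul_right hsg
    obtain ⟨t, ht⟩ := hsdvd
    have hcopBA := hcopAB.symm
    obtain ⟨u, v, huv⟩ := hcopAB
    have hp'q' : (p - u * (s * t)) * A + (q - v * (s * t)) * B = 0 := by
      linear_combination ht - (s * t) * huv
    have hBdvd : B ∣ (p - u * (s * t)) := by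
      have hdvd : B ∣ (p - u * (s * t)) * A :=
        ⟨-(q - v * (s * t)), by linear_combination hp'q'⟩
      exact hcopBA.dvd_of_dvd_mul_right hdvd
    obtain ⟨w, hw⟩ := hBdvd
    have hq' : q - v * (s * t) = w * (-A) := by
      have hz : B * ((q - v * (s * t)) - w * (-A)) = 0 := by
        linear_combination hp'q' - A * hw
      rcases mul_eq_zero.mp hz with h | h
      · exact absurd h hBne
      · exact sub_eq_zero.mp h
    have hp : p = w * B + (u * t) * s := by linear_combination hw
    have hq : q = w * (-A) + (v * t) * s := by linear_combination hq'
    have hrepr : ((p, q) : Polynomial ℚ × Polynomial ℚ)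
        = w • ((B, -A) : Polynomial ℚ × Polynomial ℚ)
          + (u * t) • ((s, (0 : Polynomial ℚ)) : Polynomial ℚ × Polynomial ℚ)
          + (v * t) • (((0 : Polynomial ℚ), s) : Polynomial ℚ × Polynomial ℚ) := by
      apply Prod.ext <;> simp [smul_eq_mul, hp, hq]
    rw [hrepr]
    refine Submodule.add_mem _ (Submodule.add_mem _ ?_ ?_) ?_ <;>
      exact Submodule.smul_mem _ _ (Submodule.subset_span (by simp))
  · rw [Submodule.span_le]
    rintro x hx
    simp only [Set.mem_insert_iff, Set.mem_singleton_iff] at hx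
    rcases hx with rfl | rfl | rfl
    · rw [SetLike.mem_coe, LinearMap.mem_ker, hker, ← hA, ← hB]
      exact ⟨0, by ring⟩
    · rw [SetLike.mem_coe, LinearMap.mem_ker, hker]
      have ha' := geom_sum_mul (X : Polynomial ℚ) a
      exact ⟨∑ i ∈ Finset.range a, X ^ i, by rw [← hs, ← ha']; ring⟩
    · rw [SetLike.mem_coe, LinearMap.mem_ker, hker]
      have hb' := geom_sum_mul (X : Polynomial ℚ) b
      exact ⟨∑ i ∈ Finset.range b, X ^ i, by rw [← hs, ← hb']; ring⟩
end

section
/- Let k ≥ 1 and m ≥ 3 be integers, and let a₁ ≥ a₂ ≥ … ≥ a_m be integers with aᵢ > −k for every i and Σᵢ aᵢ = −k. Then a₁ + a_m > −k. Moreover, if a₂ + a_m ≤ −k, then a₁ ≥ 0 and a₁ + a₂ > −k. -/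
/-- **Integer-combinatorics core of Sublemma 11.5.** Let `k ≥ 1`, `m ≥ 3`, and
`a₁ ≥ a₂ ≥ … ≥ a_m` integers with `aᵢ > −k` for all `i` and `Σᵢ aᵢ = −k`.  Then
`a₁ + a_m > −k`; moreover if `a₂ + a_m ≤ −k` then `a₁ ≥ 0` and `a₁ + a₂ > −k`. -/
theorem stmt9 (k : ℤ) (hk : 1 ≤ k) (m : ℕ) (hm : 3 ≤ m) (a : Fin m → ℤ)
    (hmono : ∀ i j : Fin m, i ≤ j → a j ≤ a i)
    (hbound : ∀ i, -k < a i) (hsum : ∑ i, a i = -k) :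
    -k < a ⟨0, by omega⟩ + a ⟨m - 1, by omega⟩ ∧
    (a ⟨1, by omega⟩ + a ⟨m - 1, by omega⟩ ≤ -k →
      0 ≤ a ⟨0, by omega⟩ ∧ -k < a ⟨0, by omega⟩ + a ⟨1, by omega⟩) := by
  set i0 : Fin m := ⟨0, by omega⟩ with hi0def
  set i1 : Fin m := ⟨1, by omega⟩ with hi1def
  set il : Fin m := ⟨m - 1, by omega⟩ with hildef
  have h01 : i0 ≠ i1 := by simp [hi0def, hi1def, Fin.ext_iff]
  have h0l : i0 ≠ il := by simp [hi0def, hildef, Fin.ext_iff]; omega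
  have h1l : i1 ≠ il := by simp [hi1def, hildef, Fin.ext_iff]; omega
  have hle0 : ∀ i : Fin m, a i ≤ a i0 := fun i =>
    hmono i0 i (by simp [hi0def, Fin.le_def])
  have hle1 : ∀ i : Fin m, i ≠ i0 → i ≠ i1 → a i ≤ a i1 := by
    intro i hi0 hi1
    apply hmono i1 i
    rw [Fin.le_def]
    have h1 : (i : ℕ) ≠ 0 := by
      intro h; exact hi0 (by simp [hi0def, Fin.ext_iff, h])
    have h2 : (i : ℕ) ≠ 1 := by
      intro h; exact hi1 (by simp [hi1def, Fin.ext_iff, h])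
    simp [hi1def]; omega
  -- sum decompositions
  have hmem0 : i0 ∈ (Finset.univ : Finset (Fin m)) := Finset.mem_univ _
  have hmeml0 : il ∈ Finset.univ.erase i0 := by
    simp [Finset.mem_erase, Ne.symm h0l]
  have hmem1 : i1 ∈ Finset.univ.erase i0 := by
    simp [Finset.mem_erase, Ne.symm h01]
  have hs0 : a i0 + ∑ i ∈ Finset.univ.erase i0, a i = -k := by
    rw [Finset.add_sum_erase _ _ hmem0, hsum]
  -- set s : erase i0 and il
  have hsl : a il + ∑ i ∈ (Finset.univ.erase i0).erase il, a i
      = ∑ i ∈ Finset.univ.erase i0, a i :=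
    Finset.add_sum_erase _ _ hmeml0
  have hcard_s : ((Finset.univ.erase i0).erase il).card = m - 2 := by
    rw [Finset.card_erase_of_mem hmeml0, Finset.card_erase_of_mem hmem0,
      Finset.card_univ, Fintype.card_fin]
    omega
  constructor
  · by_contra hcon
    push_neg at hcon
    have hub : ∑ i ∈ (Finset.univ.erase i0).erase il, a i
        ≤ ((Finset.univ.erase i0).erase il).card • a i0 :=
      Finset.sum_le_card_nsmul _ _ _ (fun i _ => hle0 i)
    rw [hcard_s, nsmul_eq_mul] at hub
    have hcast : (1 : ℤ) ≤ ((m - 2 : ℕ) : ℤ) := by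
      have : (1 : ℕ) ≤ m - 2 := by omega
      exact_mod_cast this
    have h0nonneg : 0 ≤ a i0 := by nlinarith [hs0, hsl]
    have := hbound il
    linarith [hs0, hsl]
  · intro hcon
    have ha1neg : a i1 < 0 := by linarith [hbound il]
    have hs1 : a i1 + ∑ i ∈ (Finset.univ.erase i0).erase i1, a i
        = ∑ i ∈ Finset.univ.erase i0, a i :=
      Finset.add_sum_erase _ _ hmem1
    have hmemll : il ∈ (Finset.univ.erase i0).erase i1 := by
      simp [Finset.mem_erase, Ne.symm h0l, Ne.symm h1l]
    have hsll : a il + ∑ i ∈ ((Finset.univ.erase i0).erase i1).erase il, a i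
        = ∑ i ∈ (Finset.univ.erase i0).erase i1, a i :=
      Finset.add_sum_erase _ _ hmemll
    have hnonpos : ∑ i ∈ ((Finset.univ.erase i0).erase i1).erase il, a i ≤ 0 := by
      apply Finset.sum_nonpos
      intro i hi
      simp only [Finset.mem_erase] at hi
      have := hle1 i hi.2.2.1 hi.2.1
      linarith
    constructor
    · linarith [hs0, hs1, hsll]
    · have hneg : ∑ i ∈ (Finset.univ.erase i0).erase i1, a i < 0 := by
        apply Finset.sum_neg
        · intro i hi
          simp only [Finset.mem_erase] at hi
          have := hle1 i hi.2.1 hi.1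
          linarith
        · exact ⟨il, hmemll⟩
      linarith [hs0, hs1]
end

section
/- Let F ∈ ℂ[X, Y, Z] be the homogeneous quartic F = X⁴ − X·Y³ + X³·Z − Y³·Z − X²·Z² − X·Y·Z² − Y²·Z² + Y·Z³. If (x, y, z) ∈ ℂ³ satisfies ∂F/∂X(x,y,z) = ∂F/∂Y(x,y,z) = ∂F/∂Z(x,y,z) = 0, then (x, y, z) = (0, 0, 0). In particular, F defines a smooth plane quartic curve in ℙ². -/
open MvPolynomial

/-- **Proposition 10.3 (smoothness of the quartic).** Let
`F = X⁴ − XY³ + X³Z − Y³Z − X²Z² − XYZ² − Y²Z² + YZ³ ∈ ℂ[X,Y,Z]`.  If all three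
formal partial derivatives of `F` vanish at `(x, y, z) ∈ ℂ³`, then
`(x, y, z) = (0, 0, 0)`; in particular `F` defines a smooth plane quartic. -/
theorem stmt10 (F : MvPolynomial (Fin 3) ℂ)
    (hF : F = X 0 ^ 4 - X 0 * X 1 ^ 3 + X 0 ^ 3 * X 2 - X 1 ^ 3 * X 2
      - X 0 ^ 2 * X 2 ^ 2 - X 0 * X 1 * X 2 ^ 2 - X 1 ^ 2 * X 2 ^ 2 + X 1 * X 2 ^ 3)
    (x y z : ℂ)
    (h0 : eval ![x, y, z] (pderiv 0 F) = 0)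
    (h1 : eval ![x, y, z] (pderiv 1 F) = 0)
    (h2 : eval ![x, y, z] (pderiv 2 F) = 0) :
    x = 0 ∧ y = 0 ∧ z = 0 := by
  subst hF
  have h0 : 4*x^3 - y^3 + 3*x^2*z - 2*x*z^2 - y*z^2 = 0 := by
    rw [← h0]; simp [pderiv_mul, pderiv_pow, pderiv_X]; ring
  have h1 : -3*x*y^2 - 3*y^2*z - x*z^2 - 2*y*z^2 + z^3 = 0 := by
    rw [← h1]; simp [pderiv_mul, pderiv_pow, pderiv_X]; ring
  have h2 : x^3 - y^3 - 2*x^2*z - 2*x*y*z - 2*y^2*z + 3*y*z^2 = 0 := by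
    rw [← h2]; simp [pderiv_mul, pderiv_pow, pderiv_X]; ring
  have hx : x ^ 7 = 0 := by
    linear_combination (((-19:ℂ)/162)*z^4 + ((-61:ℂ)/162)*y*z^3 + ((-7:ℂ)/54)*y^2*z^2 + ((-43:ℂ)/54)*y^3*z + ((-1:ℂ)/4)*y^4 + ((23:ℂ)/81)*x*z^3 + ((155:ℂ)/432)*x*y*z^2 + ((1:ℂ)/16)*x*y^3 + ((13:ℂ)/216)*x^2*z^2 + ((-2:ℂ)/27)*x^2*y*z + ((-3:ℂ)/16)*x^3*z + ((1:ℂ)/4)*x^4) * h0 +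
      (((70:ℂ)/81)*y*z^3 + ((205:ℂ)/1296)*y^2*z^2 + ((-1:ℂ)/6)*y^3*z + ((-1:ℂ)/48)*y^4 + ((-19:ℂ)/81)*x*z^3 + ((-379:ℂ)/648)*x*y*z^2 + ((-13:ℂ)/54)*x*y^2*z + ((5:ℂ)/162)*x^2*z^2 + ((-353:ℂ)/432)*x^2*y*z + ((-1:ℂ)/4)*x^2*y^2) * h1 +
      (((-53:ℂ)/162)*z^4 + ((233:ℂ)/1296)*y*z^3 + ((103:ℂ)/108)*y^2*z^2 + ((155:ℂ)/432)*y^3*z + ((1:ℂ)/4)*y^4 + ((-31:ℂ)/648)*x*z^3 + ((-10:ℂ)/27)*x*y*z^2 + ((355:ℂ)/432)*x^2*z^2 + ((8:ℂ)/27)*x^2*y*z) * h2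
  have hy : y ^ 7 = 0 := by
    linear_combination (((10:ℂ)/81)*z^4 + ((-29:ℂ)/810)*y*z^3 + ((1:ℂ)/54)*y^2*z^2 + ((313:ℂ)/270)*y^3*z + ((-17:ℂ)/30)*y^4 + ((-307:ℂ)/810)*x*z^3 + ((13:ℂ)/60)*x*y*z^2 + ((7:ℂ)/45)*x^2*z^2 + ((-23:ℂ)/270)*x^2*y*z) * h0 +
      (((-671:ℂ)/810)*y*z^3 + ((-97:ℂ)/1620)*y^2*z^2 + ((13:ℂ)/45)*y^3*z + ((20:ℂ)/81)*x*z^3 + ((176:ℂ)/405)*x*y*z^2 + ((29:ℂ)/54)*x*y^2*z + ((-20:ℂ)/81)*x^2*z^2 + ((391:ℂ)/270)*x^2*y*z + ((-9:ℂ)/10)*x^2*y^2) * h1 +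
      (((257:ℂ)/810)*z^4 + ((-539:ℂ)/1620)*y*z^3 + ((-31:ℂ)/30)*y^2*z^2 + ((-79:ℂ)/270)*y^3*z + ((-13:ℂ)/30)*y^4 + ((-79:ℂ)/405)*x*z^3 + ((19:ℂ)/270)*x*y*z^2 + ((-28:ℂ)/45)*x^2*z^2 + ((46:ℂ)/135)*x^2*y*z) * h2
  have hz : z ^ 7 = 0 := by
    linear_combination (((-7:ℂ)/2)*z^4 + ((-171:ℂ)/20)*y*z^3 + ((-227:ℂ)/12)*y^2*z^2 + ((231:ℂ)/20)*y^3*z + ((99:ℂ)/20)*y^4 + ((-163:ℂ)/20)*x*z^3 + ((-136:ℂ)/15)*x*y*z^2 + ((68:ℂ)/15)*x^2*z^2 + ((57:ℂ)/10)*x^2*y*z) * h0 +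
      ((1:ℂ)*z^4 + ((41:ℂ)/20)*y*z^3 + ((19:ℂ)/30)*y^2*z^2 + ((33:ℂ)/10)*y^3*z + (-6:ℂ)*x*z^3 + ((427:ℂ)/30)*x*y*z^2 + (9:ℂ)*x*y^2*z + ((-85:ℂ)/6)*x^2*z^2 + ((297:ℂ)/20)*x^2*y*z + ((99:ℂ)/20)*x^2*y^2) * h1 +
      (((-71:ℂ)/60)*z^4 + ((-89:ℂ)/60)*y*z^3 + ((-449:ℂ)/60)*y^2*z^2 + ((-33:ℂ)/20)*y^3*z + ((-99:ℂ)/20)*y^4 + ((-259:ℂ)/15)*x*z^3 + ((-793:ℂ)/30)*x*y*z^2 + ((-272:ℂ)/15)*x^2*z^2 + ((-114:ℂ)/5)*x^2*y*z) * h2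
  exact ⟨pow_eq_zero_iff (by norm_num : (7:ℕ) ≠ 0) |>.mp hx,
    pow_eq_zero_iff (by norm_num : (7:ℕ) ≠ 0) |>.mp hy,
    pow_eq_zero_iff (by norm_num : (7:ℕ) ≠ 0) |>.mp hz⟩
end

section
/- Let f, g, h ∈ ℚ[x, y] be the polynomials f = x⁴ − x·y³ + x³ − y³ − x² − x·y − y² + y, g = 2x³ − y³ − x² − 2x·y + y, and h = x² − y. Then there exists a formal power series φ ∈ ℚ⟦X⟧ with zero constant coefficient such that: (i) substituting x ↦ X and y ↦ φ into f gives the zero power series; (ii) the coefficient of X² in φ equals 1 (in particular it is nonzero); (iii) the power series obtained by substituting x ↦ X, y ↦ φ into g has order at least 12 (its coefficients of Xⁱ vanish for all i < 12); and (iv) the power series obtained by substituting x ↦ X, y ↦ φ into h has order at least 6. -/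
open MvPolynomial

noncomputable section Stmt11Aux

namespace Stmt11Aux

open PowerSeries

set_option maxHeartbeats 2000000

/-- The contraction map whose fixed point solves `f(X, y) = 0`. -/
def Amap (y : PowerSeries ℚ) : PowerSeries ℚ :=
  (PowerSeries.X + 1) * y ^ 3 + y ^ 2 + PowerSeries.X * y
    + PowerSeries.X ^ 2 - PowerSeries.X ^ 3 - PowerSeries.X ^ 4

lemma constantCoeff_Amap {y : PowerSeries ℚ} (hy : constantCoeff y = 0) :
    constantCoeff (Amap y) = 0 := by
  simp [Amap, map_add, map_sub, map_mul, map_pow, hy]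

lemma Amap_congr {n : ℕ} {y y' : PowerSeries ℚ} (hy : constantCoeff y = 0)
    (hy' : constantCoeff y' = 0)
    (hc : ∀ i < n, coeff i y = coeff i y') :
    coeff n (Amap y) = coeff n (Amap y') := by
  have hd : (PowerSeries.X : PowerSeries ℚ) ^ n ∣ (y - y') := by
    rw [PowerSeries.X_pow_dvd_iff]
    intro m hm
    simp [map_sub, hc m hm]
  have hv : (PowerSeries.X : PowerSeries ℚ) ∣
      ((PowerSeries.X + 1) * (y ^ 2 + y * y' + y' ^ 2) + (y + y') + PowerSeries.X) := by
    rw [PowerSeries.X_dvd_iff]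
    simp [map_add, map_mul, map_pow, hy, hy']
  have hkey : (PowerSeries.X : PowerSeries ℚ) ^ (n + 1) ∣ (Amap y - Amap y') := by
    have hident : Amap y - Amap y' = (y - y') *
        ((PowerSeries.X + 1) * (y ^ 2 + y * y' + y' ^ 2) + (y + y') + PowerSeries.X) := by
      simp only [Amap]; ring
    rw [hident, pow_succ]
    exact mul_dvd_mul hd hv
  have h0 := (PowerSeries.X_pow_dvd_iff.mp hkey) n (Nat.lt_succ_self n)
  rw [map_sub, sub_eq_zero] at h0
  exact h0

/-- Coefficients of the fixed point, defined by strong recursion. -/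
def c : ℕ → ℚ
  | n => coeff n (Amap (PowerSeries.mk fun i => if h : i < n then c i else 0))
  decreasing_by exact h

lemma c_eq (n : ℕ) :
    c n = coeff n (Amap (PowerSeries.mk fun i => if _ : i < n then c i else 0)) := by
  rw [c]

lemma c0 : c 0 = 0 := by
  rw [c_eq]
  have h : (PowerSeries.mk fun i => if _ : i < 0 then c i else 0) = (0 : PowerSeries ℚ) := by
    ext m; simp
  rw [h, PowerSeries.coeff_zero_eq_constantCoeff_apply]
  exact constantCoeff_Amap (map_zero _)

/-- The fixed point power series. -/
def phi : PowerSeries ℚ := PowerSeries.mk c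

lemma constantCoeff_trunc (n : ℕ) :
    constantCoeff (PowerSeries.mk fun i => if _ : i < n then c i else 0) = 0 := by
  rw [← PowerSeries.coeff_zero_eq_constantCoeff_apply, PowerSeries.coeff_mk]
  split <;> simp [c0]

lemma constantCoeff_phi : constantCoeff phi = 0 := by
  rw [← PowerSeries.coeff_zero_eq_constantCoeff_apply, phi, PowerSeries.coeff_mk]
  exact c0

lemma phi_fixed : phi = Amap phi := by
  ext n
  rw [phi, PowerSeries.coeff_mk, c_eq]
  exact Amap_congr (constantCoeff_trunc n) constantCoeff_phi
    (fun i hi => by simp [phi, PowerSeries.coeff_mk, hi])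

/-- The polynomial approximation of `phi` to order 12. -/
def phi0 : PowerSeries ℚ :=
  PowerSeries.X ^ 2 + PowerSeries.X ^ 6 + 2 * PowerSeries.X ^ 7 + 4 * PowerSeries.X ^ 8
    + 8 * PowerSeries.X ^ 9 + 19 * PowerSeries.X ^ 10 + 44 * PowerSeries.X ^ 11

lemma E : phi = (PowerSeries.X + 1) * phi ^ 3 + phi ^ 2 + PowerSeries.X * phi
    + PowerSeries.X ^ 2 - PowerSeries.X ^ 3 - PowerSeries.X ^ 4 := phi_fixed

/-- Explicit cofactor for `phi0 - Amap phi0 = -X^12 * R`. -/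
def R : PowerSeries ℚ :=
  101 + 128 * PowerSeries.X + 96 * PowerSeries.X ^ 2 + 236 * PowerSeries.X ^ 3 + 266 * PowerSeries.X ^ 4 + 360 * PowerSeries.X ^ 5 + 747 * PowerSeries.X ^ 6 + 1605 * PowerSeries.X ^ 7 + 2955 * PowerSeries.X ^ 8 + 4920 * PowerSeries.X ^ 9 + 7428 * PowerSeries.X ^ 10 + 9204 * PowerSeries.X ^ 11 + 13420 * PowerSeries.X ^ 12 + 11836 * PowerSeries.X ^ 13 + 12987 * PowerSeries.X ^ 14 + 26489 * PowerSeries.X ^ 15 + 49946 * PowerSeries.X ^ 16 + 81060 * PowerSeries.X ^ 17 + 119011 * PowerSeries.X ^ 18 + 164335 * PowerSeries.X ^ 19 + 204468 * PowerSeries.X ^ 20 + 195536 * PowerSeries.X ^ 21 + 85184 * PowerSeries.X ^ 22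

def S : PowerSeries ℚ :=
  100 + 24 * PowerSeries.X + 60 * PowerSeries.X ^ 2 + 144 * PowerSeries.X ^ 3 + 36 * PowerSeries.X ^ 4 + 96 * PowerSeries.X ^ 5 + 259 * PowerSeries.X ^ 6 + 690 * PowerSeries.X ^ 7 + 1200 * PowerSeries.X ^ 8 + 2048 * PowerSeries.X ^ 9 + 3444 * PowerSeries.X ^ 10 + 5760 * PowerSeries.X ^ 11 + 7660 * PowerSeries.X ^ 12 + 4176 * PowerSeries.X ^ 13 + 8811 * PowerSeries.X ^ 14 + 17678 * PowerSeries.X ^ 15 + 32268 * PowerSeries.X ^ 16 + 48792 * PowerSeries.X ^ 17 + 70219 * PowerSeries.X ^ 18 + 94116 * PowerSeries.X ^ 19 + 110352 * PowerSeries.X ^ 20 + 85184 * PowerSeries.X ^ 21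

lemma constantCoeff_phi0 : constantCoeff phi0 = 0 := by
  simp [phi0, map_add, map_mul, map_pow]

lemma X_pow_12_dvd_sub : (PowerSeries.X : PowerSeries ℚ) ^ 12 ∣ (phi - phi0) := by
  have hu0 : constantCoeff ((PowerSeries.X + 1) * (phi ^ 2 + phi * phi0 + phi0 ^ 2)
      + (phi + phi0) + PowerSeries.X) = 0 := by
    simp [map_add, map_mul, map_pow, constantCoeff_phi, constantCoeff_phi0]
  set u : PowerSeries ℚ := (PowerSeries.X + 1) * (phi ^ 2 + phi * phi0 + phi0 ^ 2)
    + (phi + phi0) + PowerSeries.X with hu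
  have hunit : IsUnit (1 - u) := by
    rw [PowerSeries.isUnit_iff_constantCoeff]
    simp [map_sub, hu0]
  have hident : (phi - phi0) * (1 - u) = PowerSeries.X ^ 12 * R := by
    rw [hu]
    simp only [phi0, R]
    linear_combination E
  obtain ⟨v, hv⟩ := hunit.exists_right_inv
  refine ⟨R * v, ?_⟩
  calc phi - phi0 = (phi - phi0) * ((1 - u) * v) := by rw [hv, mul_one]
  _ = ((phi - phi0) * (1 - u)) * v := by ring
  _ = PowerSeries.X ^ 12 * (R * v) := by rw [hident]; ring

lemma coeff_sub_eq_zero {i : ℕ} (hi : i < 12) : coeff i phi = coeff i phi0 := by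
  have h := PowerSeries.X_pow_dvd_iff.mp X_pow_12_dvd_sub i hi
  rw [map_sub, sub_eq_zero] at h
  exact h

end Stmt11Aux

end Stmt11Aux

open Stmt11Aux

/-- **Computational claims of Proposition 10.3.** Let
`f = x⁴ − xy³ + x³ − y³ − x² − xy − y² + y`,
`g = 2x³ − y³ − x² − 2xy + y`, `h = x² − y` in `ℚ[x,y]`.  There is a power series
`φ ∈ ℚ⟦X⟧` with zero constant coefficient such that `f(X, φ) = 0`, the coefficient of
`X²` in `φ` is `1`, `g(X, φ)` has order at least `12`, and `h(X, φ)` has order at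
least `6`. -/
theorem stmt11 (f g h : MvPolynomial (Fin 2) ℚ)
    (hf : f = X 0 ^ 4 - X 0 * X 1 ^ 3 + X 0 ^ 3 - X 1 ^ 3 - X 0 ^ 2
      - X 0 * X 1 - X 1 ^ 2 + X 1)
    (hg : g = 2 * X 0 ^ 3 - X 1 ^ 3 - X 0 ^ 2 - 2 * X 0 * X 1 + X 1)
    (hh : h = X 0 ^ 2 - X 1) :
    ∃ φ : PowerSeries ℚ,
      PowerSeries.constantCoeff φ = 0 ∧
      aeval ![PowerSeries.X, φ] f = 0 ∧
      PowerSeries.coeff 2 φ = 1 ∧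
      (∀ i < 12, PowerSeries.coeff i (aeval ![PowerSeries.X, φ] g) = 0) ∧
      (∀ i < 6, PowerSeries.coeff i (aeval ![PowerSeries.X, φ] h) = 0) := by
  refine ⟨phi, constantCoeff_phi, ?_, ?_, ?_, ?_⟩
  · rw [hf]
    simp only [map_add, map_sub, map_mul, map_pow, aeval_X, Matrix.cons_val_zero,
      Matrix.cons_val_one, Matrix.head_cons]
    linear_combination E
  · rw [coeff_sub_eq_zero (by norm_num)]
    have h2' : PowerSeries.coeff 2 (phi0 - PowerSeries.X ^ 2) = 0 := by
      have hident : phi0 - PowerSeries.X ^ 2 = PowerSeries.X ^ 3 *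
          (PowerSeries.X ^ 3 + 2 * PowerSeries.X ^ 4 + 4 * PowerSeries.X ^ 5
            + 8 * PowerSeries.X ^ 6 + 19 * PowerSeries.X ^ 7 + 44 * PowerSeries.X ^ 8) := by
        simp only [phi0]; ring
      exact PowerSeries.X_pow_dvd_iff.mp ⟨_, hident⟩ 2 (by norm_num)
    rw [map_sub, sub_eq_zero] at h2'
    rw [h2', PowerSeries.coeff_X_pow]
    norm_num
  · intro i hi
    rw [hg]
    simp only [map_add, map_sub, map_mul, map_pow, map_ofNat, aeval_X, Matrix.cons_val_zero,
      Matrix.cons_val_one, Matrix.head_cons]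
    have hdvd : (PowerSeries.X : PowerSeries ℚ) ^ 12 ∣
        (2 * PowerSeries.X ^ 3 - phi ^ 3 - PowerSeries.X ^ 2
          - 2 * PowerSeries.X * phi + phi) := by
      have hident : 2 * PowerSeries.X ^ 3 - phi ^ 3 - PowerSeries.X ^ 2
          - 2 * PowerSeries.X * phi + phi =
          PowerSeries.X ^ 12 * (-S)
          + (phi - phi0) * (-(phi ^ 2 + phi * phi0 + phi0 ^ 2) - 2 * PowerSeries.X + 1) := by
        simp only [phi0, S]; ring
      rw [hident]
      exact dvd_add (Dvd.intro _ rfl) (Dvd.dvd.mul_right X_pow_12_dvd_sub _)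
    exact PowerSeries.X_pow_dvd_iff.mp hdvd i hi
  · intro i hi
    rw [hh]
    simp only [map_add, map_sub, map_mul, map_pow, aeval_X, Matrix.cons_val_zero,
      Matrix.cons_val_one, Matrix.head_cons]
    have hdvd : (PowerSeries.X : PowerSeries ℚ) ^ 6 ∣ (PowerSeries.X ^ 2 - phi) := by
      have hident : (PowerSeries.X : PowerSeries ℚ) ^ 2 - phi = PowerSeries.X ^ 6 *
          (-(1 + 2 * PowerSeries.X + 4 * PowerSeries.X ^ 2 + 8 * PowerSeries.X ^ 3
            + 19 * PowerSeries.X ^ 4 + 44 * PowerSeries.X ^ 5)) - (phi - phi0) := by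
        simp only [phi0]; ring
      rw [hident]
      exact dvd_sub (Dvd.intro _ rfl)
        (dvd_trans (pow_dvd_pow PowerSeries.X (by norm_num)) X_pow_12_dvd_sub)
    exact PowerSeries.X_pow_dvd_iff.mp hdvd i hi
end

section
/- Let f ∈ ℚ[x, y] be f = x⁴ − x·y³ + x³ − y³ − x² − x·y − y² + y. If φ ∈ ℚ⟦X⟧ is a formal power series with zero constant coefficient such that substituting x ↦ X, y ↦ φ into f gives the zero power series, then the coefficients of φ in degrees 0 through 12 are, in order: 0, 0, 1, 0, 0, 0, 1, 2, 4, 8, 19, 44, 101. That is, φ = X² + X⁶ + 2X⁷ + 4X⁸ + 8X⁹ + 19X¹⁰ + 44X¹¹ + 101X¹² + O(X¹³). -/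
set_option maxHeartbeats 4000000


open MvPolynomial

/-- **Branch expansion of Proposition 10.3.** Let
`f = x⁴ − xy³ + x³ − y³ − x² − xy − y² + y ∈ ℚ[x,y]`.  If `φ ∈ ℚ⟦X⟧` has zero constant
coefficient and `f(X, φ) = 0`, then
`φ = X² + X⁶ + 2X⁷ + 4X⁸ + 8X⁹ + 19X¹⁰ + 44X¹¹ + 101X¹² + O(X¹³)`. -/
theorem stmt12 (f : MvPolynomial (Fin 2) ℚ)
    (hf : f = X 0 ^ 4 - X 0 * X 1 ^ 3 + X 0 ^ 3 - X 1 ^ 3 - X 0 ^ 2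
      - X 0 * X 1 - X 1 ^ 2 + X 1)
    (φ : PowerSeries ℚ)
    (hφ0 : PowerSeries.constantCoeff φ = 0)
    (hroot : aeval ![PowerSeries.X, φ] f = 0) :
    PowerSeries.coeff 0 φ = 0 ∧ PowerSeries.coeff 1 φ = 0 ∧
    PowerSeries.coeff 2 φ = 1 ∧ PowerSeries.coeff 3 φ = 0 ∧
    PowerSeries.coeff 4 φ = 0 ∧ PowerSeries.coeff 5 φ = 0 ∧
    PowerSeries.coeff 6 φ = 1 ∧ PowerSeries.coeff 7 φ = 2 ∧
    PowerSeries.coeff 8 φ = 4 ∧ PowerSeries.coeff 9 φ = 8 ∧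
    PowerSeries.coeff 10 φ = 19 ∧ PowerSeries.coeff 11 φ = 44 ∧
    PowerSeries.coeff 12 φ = 101 := by
  subst hf
  have heq : PowerSeries.X ^ 4 - PowerSeries.X * φ ^ 3 + PowerSeries.X ^ 3 - φ ^ 3
      - PowerSeries.X ^ 2 - PowerSeries.X * φ - φ ^ 2 + φ = 0 := by
    simpa using hroot
  have key : ∀ n : ℕ, PowerSeries.coeff n (PowerSeries.X ^ 4 - PowerSeries.X * φ ^ 3
      + PowerSeries.X ^ 3 - φ ^ 3 - PowerSeries.X ^ 2 - PowerSeries.X * φ - φ ^ 2 + φ) = 0 :=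
    fun n => by rw [heq, map_zero]
  have h0 : PowerSeries.coeff 0 φ = 0 := by
    simpa using hφ0
  have h1 : PowerSeries.coeff 1 φ = 0 := by
    have hn := key 1
    simp only [map_add, map_sub, pow_succ, pow_zero, one_mul, PowerSeries.coeff_mul,
      Finset.Nat.sum_antidiagonal_eq_sum_range_succ_mk, Finset.sum_range_succ,
      Finset.sum_range_zero, PowerSeries.coeff_X, h0] at hn
    norm_num at hn
    linarith
  have h2 : PowerSeries.coeff 2 φ = 1 := by
    have hn := key 2
    simp only [map_add, map_sub, pow_succ, pow_zero, one_mul, PowerSeries.coeff_mul,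
      Finset.Nat.sum_antidiagonal_eq_sum_range_succ_mk, Finset.sum_range_succ,
      Finset.sum_range_zero, PowerSeries.coeff_X, h0, h1] at hn
    norm_num at hn
    linarith
  have h3 : PowerSeries.coeff 3 φ = 0 := by
    have hn := key 3
    simp only [map_add, map_sub, pow_succ, pow_zero, one_mul, PowerSeries.coeff_mul,
      Finset.Nat.sum_antidiagonal_eq_sum_range_succ_mk, Finset.sum_range_succ,
      Finset.sum_range_zero, PowerSeries.coeff_X, h0, h1, h2] at hn
    norm_num at hn
    linarith
  have h4 : PowerSeries.coeff 4 φ = 0 := by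
    have hn := key 4
    simp only [map_add, map_sub, pow_succ, pow_zero, one_mul, PowerSeries.coeff_mul,
      Finset.Nat.sum_antidiagonal_eq_sum_range_succ_mk, Finset.sum_range_succ,
      Finset.sum_range_zero, PowerSeries.coeff_X, h0, h1, h2, h3] at hn
    norm_num at hn
    linarith
  have h5 : PowerSeries.coeff 5 φ = 0 := by
    have hn := key 5
    simp only [map_add, map_sub, pow_succ, pow_zero, one_mul, PowerSeries.coeff_mul,
      Finset.Nat.sum_antidiagonal_eq_sum_range_succ_mk, Finset.sum_range_succ,
      Finset.sum_range_zero, PowerSeries.coeff_X, h0, h1, h2, h3, h4] at hn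
    norm_num at hn
    linarith
  have h6 : PowerSeries.coeff 6 φ = 1 := by
    have hn := key 6
    simp only [map_add, map_sub, pow_succ, pow_zero, one_mul, PowerSeries.coeff_mul,
      Finset.Nat.sum_antidiagonal_eq_sum_range_succ_mk, Finset.sum_range_succ,
      Finset.sum_range_zero, PowerSeries.coeff_X, h0, h1, h2, h3, h4, h5] at hn
    norm_num at hn
    linarith
  have h7 : PowerSeries.coeff 7 φ = 2 := by
    have hn := key 7
    simp only [map_add, map_sub, pow_succ, pow_zero, one_mul, PowerSeries.coeff_mul,
      Finset.Nat.sum_antidiagonal_eq_sum_range_succ_mk, Finset.sum_range_succ,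
      Finset.sum_range_zero, PowerSeries.coeff_X, h0, h1, h2, h3, h4, h5, h6] at hn
    norm_num at hn
    linarith
  have h8 : PowerSeries.coeff 8 φ = 4 := by
    have hn := key 8
    simp only [map_add, map_sub, pow_succ, pow_zero, one_mul, PowerSeries.coeff_mul,
      Finset.Nat.sum_antidiagonal_eq_sum_range_succ_mk, Finset.sum_range_succ,
      Finset.sum_range_zero, PowerSeries.coeff_X, h0, h1, h2, h3, h4, h5, h6, h7] at hn
    norm_num at hn
    linarith
  have h9 : PowerSeries.coeff 9 φ = 8 := by
    have hn := key 9
    simp only [map_add, map_sub, pow_succ, pow_zero, one_mul, PowerSeries.coeff_mul,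
      Finset.Nat.sum_antidiagonal_eq_sum_range_succ_mk, Finset.sum_range_succ,
      Finset.sum_range_zero, PowerSeries.coeff_X, h0, h1, h2, h3, h4, h5, h6, h7, h8] at hn
    norm_num at hn
    linarith
  have h10 : PowerSeries.coeff 10 φ = 19 := by
    have hn := key 10
    simp only [map_add, map_sub, pow_succ, pow_zero, one_mul, PowerSeries.coeff_mul,
      Finset.Nat.sum_antidiagonal_eq_sum_range_succ_mk, Finset.sum_range_succ,
      Finset.sum_range_zero, PowerSeries.coeff_X, h0, h1, h2, h3, h4, h5, h6, h7, h8, h9] at hn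
    norm_num at hn
    linarith
  have h11 : PowerSeries.coeff 11 φ = 44 := by
    have hn := key 11
    simp only [map_add, map_sub, pow_succ, pow_zero, one_mul, PowerSeries.coeff_mul,
      Finset.Nat.sum_antidiagonal_eq_sum_range_succ_mk, Finset.sum_range_succ,
      Finset.sum_range_zero, PowerSeries.coeff_X, h0, h1, h2, h3, h4, h5, h6, h7, h8, h9, h10] at hn
    norm_num at hn
    linarith
  have h12 : PowerSeries.coeff 12 φ = 101 := by
    have hn := key 12
    simp only [map_add, map_sub, pow_succ, pow_zero, one_mul, PowerSeries.coeff_mul,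
      Finset.Nat.sum_antidiagonal_eq_sum_range_succ_mk, Finset.sum_range_succ,
      Finset.sum_range_zero, PowerSeries.coeff_X, h0, h1, h2, h3, h4, h5, h6, h7, h8, h9, h10, h11] at hn
    norm_num at hn
    linarith
  exact ⟨h0, h1, h2, h3, h4, h5, h6, h7, h8, h9, h10, h11, h12⟩
end

section
/- Let F ∈ ℂ[X, Y, Z] be the homogeneous quartic F = −X⁴ + X³·Y − X·Y³ − Y⁴ − X³·Z − X²·Y·Z − X·Y²·Z − Y³·Z − X·Y·Z² − Y²·Z² + Y·Z³. If (x, y, z) ∈ ℂ³ satisfies ∂F/∂X(x,y,z) = ∂F/∂Y(x,y,z) = ∂F/∂Z(x,y,z) = 0, then (x, y, z) = (0, 0, 0). In particular, F defines a smooth plane quartic curve in ℙ². -/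
open MvPolynomial

/-- **Proposition 10.4 (smoothness of the quartic).** Let
`F = −X⁴ + X³Y − XY³ − Y⁴ − X³Z − X²YZ − XY²Z − Y³Z − XYZ² − Y²Z² + YZ³ ∈ ℂ[X,Y,Z]`.
If all three formal partial derivatives of `F` vanish at `(x, y, z) ∈ ℂ³`, then
`(x, y, z) = (0, 0, 0)`; in particular `F` defines a smooth plane quartic. -/
theorem stmt13 (F : MvPolynomial (Fin 3) ℂ)
    (hF : F = -X 0 ^ 4 + X 0 ^ 3 * X 1 - X 0 * X 1 ^ 3 - X 1 ^ 4 - X 0 ^ 3 * X 2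
      - X 0 ^ 2 * X 1 * X 2 - X 0 * X 1 ^ 2 * X 2 - X 1 ^ 3 * X 2
      - X 0 * X 1 * X 2 ^ 2 - X 1 ^ 2 * X 2 ^ 2 + X 1 * X 2 ^ 3)
    (x y z : ℂ)
    (h0 : eval ![x, y, z] (pderiv 0 F) = 0)
    (h1 : eval ![x, y, z] (pderiv 1 F) = 0)
    (h2 : eval ![x, y, z] (pderiv 2 F) = 0) :
    x = 0 ∧ y = 0 ∧ z = 0 := by
  subst hF
  have e0 : -4*x^3 + 3*x^2*y - y^3 - 3*x^2*z - 2*x*y*z - y^2*z - y*z^2 = 0 := by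
    rw [← h0]; simp [pderiv_X, pderiv_mul, pderiv_pow]; ring
  have e1 : x^3 - 3*x*y^2 - 4*y^3 - x^2*z - 2*x*y*z - 3*y^2*z - x*z^2 - 2*y*z^2 + z^3 = 0 := by
    rw [← h1]; simp [pderiv_X, pderiv_mul, pderiv_pow]; ring
  have e2 : -x^3 - x^2*y - x*y^2 - y^3 - 2*x*y*z - 2*y^2*z + 3*y*z^2 = 0 := by
    rw [← h2]; simp [pderiv_X, pderiv_mul, pderiv_pow]; ring
  have hx7 : x^7 = 0 := by
    linear_combination (((-32439712675:ℂ)/1370448816)*z*z*z*z + ((19079917037:ℂ)/1370448816)*y*z*z*z + ((831238146829:ℂ)/9593141712)*y*y*z*z + ((575998486025:ℂ)/9593141712)*y*y*y*z + ((99786903973:ℂ)/2398285428)*y*y*y*y + ((55979137015:ℂ)/1199142714)*x*z*z*z + ((363678355543:ℂ)/9593141712)*x*y*z*z + ((167159693:ℂ)/1370448816)*x*y*y*z + ((34556327581:ℂ)/1199142714)*x*y*y*y + ((-8174167957:ℂ)/456816272)*x*x*z*z + ((-36112776971:ℂ)/9593141712)*x*x*y*z + ((57516401293:ℂ)/3197713904)*x*x*y*y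 + ((3:ℂ)/16)*x*x*x*z + ((-3:ℂ)/16)*x*x*x*y + ((-1:ℂ)/4)*x*x*x*x) * e0 + (((-482608943435:ℂ)/4796570856)*y*z*z*z + ((-89324803171:ℂ)/685224408)*y*y*z*z + ((82492695415:ℂ)/685224408)*y*y*y*z + ((104635691431:ℂ)/2398285428)*y*y*y*y + ((81620625517:ℂ)/599571357)*x*y*z*z + ((3224376268:ℂ)/54506487)*x*y*y*z + ((225399269299:ℂ)/9593141712)*x*y*y*y + ((-32439712675:ℂ)/456816272)*x*x*z*z + ((-80019981583:ℂ)/4796570856)*x*x*y*z + ((231864319243:ℂ)/3197713904)*x*x*y*y) * e1 + (((246046632715:ℂ)/9593141712)*z*z*z*z + ((-15628546299:ℂ)/1598856952)*y*z*z*z + ((-959237038453:ℂ)/4796570856)*y*y*z*z + ((-2703727984753:ℂ)/9593141712)*y*y*y*z + ((-74047095671:ℂ)/342612204)*y*y*y*y + ((-297562918507:ℂ)/4796570856)*x*z*z*z + ((-198288421913:ℂ)/4796570856)*x*y*z*z + ((-35846354045:ℂ)/456816272)*x*y*y*z + ((-12869904151:ℂ)/342612204)*x*y*y*y) * e2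
  have hy7 : y^7 = 0 := by
    linear_combination (((-2073067:ℂ)/342612204)*z*z*z*z + ((-5367563:ℂ)/171306102)*y*z*z*z + ((80016697:ℂ)/2398285428)*y*y*z*z + ((17987995:ℂ)/1199142714)*y*y*y*z + ((173752751:ℂ)/1199142714)*y*y*y*y + ((19658503:ℂ)/1199142714)*x*z*z*z + ((75541639:ℂ)/2398285428)*x*y*z*z + ((604531:ℂ)/171306102)*x*y*y*z + ((1183429505:ℂ)/9593141712)*x*y*y*y + ((-2073067:ℂ)/456816272)*x*x*z*z + ((-11219437:ℂ)/1199142714)*x*x*y*z + ((44163533:ℂ)/3197713904)*x*x*y*y) * e0 + (((8650184:ℂ)/599571357)*y*z*z*z + ((-28769504:ℂ)/85653051)*y*y*z*z + ((113445977:ℂ)/342612204)*y*y*y*z + ((-1852609823:ℂ)/9593141712)*y*y*y*y + ((1021607077:ℂ)/9593141712)*x*y*z*z + ((-15537665:ℂ)/218025948)*x*y*y*z + ((2456674123:ℂ)/9593141712)*x*y*y*y + ((-2073067:ℂ)/114204068)*x*x*z*z + ((-22438874:ℂ)/599571357)*x*x*y*z + ((44163533:ℂ)/799428476)*x*x*y*y)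 * e1 + (((-16370735:ℂ)/2398285428)*z*z*z*z + ((83594307:ℂ)/799428476)*y*z*z*z + ((-304309567:ℂ)/1199142714)*y*y*z*z + ((-1536597067:ℂ)/9593141712)*y*y*y*z + ((-127597301:ℂ)/342612204)*y*y*y*y + ((-324331247:ℂ)/9593141712)*x*z*z*z + ((38828263:ℂ)/1199142714)*x*y*z*z + ((-95989185:ℂ)/456816272)*x*y*y*z + ((-67127575:ℂ)/342612204)*x*y*y*y) * e2
  have hz7 : z^7 = 0 := by
    linear_combination (((3564471775:ℂ)/171306102)*z*z*z*z + ((-1275348775:ℂ)/85653051)*y*z*z*z + ((-92228329393:ℂ)/1199142714)*y*y*z*z + ((-31004071090:ℂ)/599571357)*y*y*y*z + ((-20055174971:ℂ)/599571357)*y*y*y*y + ((-202008399935:ℂ)/4796570856)*x*z*z*z + ((-77286250805:ℂ)/2398285428)*x*y*z*z + ((195943655:ℂ)/342612204)*x*y*y*z + ((-13211420455:ℂ)/599571357)*x*y*y*y + ((3678675843:ℂ)/228408136)*x*x*z*z + ((7163158291:ℂ)/2398285428)*x*x*y*z + ((-2988769943:ℂ)/199857119)*x*x*y*y) * e0 +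 (((1:ℂ)/1)*z*z*z*z + ((416011580833:ℂ)/4796570856)*y*z*z*z + ((38179252921:ℂ)/342612204)*y*y*z*z + ((-35272222153:ℂ)/342612204)*y*y*y*z + ((-22653818861:ℂ)/599571357)*y*y*y*y + ((1:ℂ)/1)*x*z*z*z + ((-587803400917:ℂ)/4796570856)*x*y*z*z + ((-10594523315:ℂ)/218025948)*x*y*y*z + ((-11088865142:ℂ)/599571357)*x*y*y*y + ((3678675843:ℂ)/57102034)*x*x*z*z + ((7163158291:ℂ)/599571357)*x*x*y*z + ((-11955079772:ℂ)/199857119)*x*x*y*y) * e1 + (((-102204409807:ℂ)/4796570856)*z*z*z*z + ((7548899557:ℂ)/799428476)*y*z*z*z + ((412984327243:ℂ)/2398285428)*y*y*z*z + ((144585356885:ℂ)/599571357)*y*y*y*z + ((15810064345:ℂ)/85653051)*y*y*y*y + ((272064821675:ℂ)/4796570856)*x*z*z*z + ((80979483779:ℂ)/2398285428)*x*y*z*z + ((1791904420:ℂ)/28551017)*x*y*y*z + ((2122555313:ℂ)/85653051)*x*y*y*y) * e2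
  refine ⟨?_, ?_, ?_⟩ <;>
    [exact pow_eq_zero_iff (by norm_num) |>.mp hx7;
     exact pow_eq_zero_iff (by norm_num) |>.mp hy7;
     exact pow_eq_zero_iff (by norm_num) |>.mp hz7]
end

section
/- Let f, g ∈ ℚ[x, y] be the polynomials f = −x⁴ + x³·y − x·y³ − y⁴ − x³ − x²·y − x·y² − y³ − x·y − y² + y and g = −x³ + x²·y − y³ − 2x·y − y² + y. Then there exists a formal power series φ ∈ ℚ⟦X⟧ with zero constant coefficient such that: (i) substituting x ↦ X, y ↦ φ into f gives the zero power series; (ii) the coefficients of X and X² in φ are both 0 and the coefficient of X³ in φ equals 1 (in particular it is nonzero); and (iii) the power series obtained by substituting x ↦ X, y ↦ φ into g has order at least 12 (its coefficients of Xⁱ vanish for all i < 12). -/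
open MvPolynomial

local notation "PX" => (PowerSeries.X : PowerSeries ℚ)

namespace Stmt14Aux

/-- The degree-11 truncation of the branch `φ`. -/
noncomputable def pp : PowerSeries ℚ :=
  PX ^ 3 + PowerSeries.C 2 * PX ^ 4 + PowerSeries.C 3 * PX ^ 5 + PowerSeries.C 5 * PX ^ 6
    + PowerSeries.C 11 * PX ^ 7 + PowerSeries.C 27 * PX ^ 8 + PowerSeries.C 66 * PX ^ 9
    + PowerSeries.C 162 * PX ^ 10 + PowerSeries.C 407 * PX ^ 11

noncomputable def Qs : PowerSeries ℚ :=
  (1043 : PowerSeries ℚ) + 1659 * PX ^ 1 + 3311 * PX ^ 2 + 7778 * PX ^ 3 + 14708 * PX ^ 4 +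
    30116 * PX ^ 5 + 64990 * PX ^ 6 + 137759 * PX ^ 7 + 283208 * PX ^ 8 + 566659 * PX ^ 9 +
    1085434 * PX ^ 10 + 1888421 * PX ^ 11 + 3663954 * PX ^ 12 + 7475465 * PX ^ 13 + 14193666 *
    PX ^ 14 + 26437120 * PX ^ 15 + 50278198 * PX ^ 16 + 95130760 * PX ^ 17 + 175611540 * PX ^
    18 + 314967339 * PX ^ 19 + 548029819 * PX ^ 20 + 920055845 * PX ^ 21 + 1498633493 * PX ^
    22 + 2529880788 * PX ^ 23 + 4217698910 * PX ^ 24 + 6627247660 * PX ^ 25 + 10429740474 * PX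
    ^ 26 + 16462508524 * PX ^ 27 + 25138772740 * PX ^ 28 + 35456184324 * PX ^ 29 + 43882407888
    * PX ^ 30 + 43687604664 * PX ^ 31 + 27439591201 * PX ^ 32

noncomputable def Rs : PowerSeries ℚ :=
  -(1042 : PowerSeries ℚ) - 609 * PX ^ 1 - 2666 * PX ^ 2 - 4988 * PX ^ 3 - 9342 * PX ^ 4 -
    19670 * PX ^ 5 - 42130 * PX ^ 6 - 86457 * PX ^ 7 - 170520 * PX ^ 8 - 325619 * PX ^ 9 -
    583531 * PX ^ 10 - 884058 * PX ^ 11 - 1792641 * PX ^ 12 - 3382812 * PX ^ 13 - 5518302 * PX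
    ^ 14 - 9017514 * PX ^ 15 - 15430803 * PX ^ 16 - 26662713 * PX ^ 17 - 43778961 * PX ^ 18 -
    64842426 * PX ^ 19 - 80505414 * PX ^ 20 - 67419143 * PX ^ 21

noncomputable def J12 : Ideal (PowerSeries ℚ) := Ideal.span {PX ^ 12}

lemma mem_J12_pow (n : ℕ) {x : PowerSeries ℚ} :
    x ∈ J12 ^ n ↔ ∀ k < 12 * n, PowerSeries.coeff k x = 0 := by
  rw [J12, Ideal.span_singleton_pow, Ideal.mem_span_singleton, ← pow_mul]
  exact PowerSeries.X_pow_dvd_iff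

instance : IsAdicComplete J12 (PowerSeries ℚ) where
  haus' x hx := by
    have h : ∀ n, x ∈ J12 ^ n := by
      intro n
      simpa only [← Ideal.one_eq_top, smul_eq_mul, mul_one, SModEq.sub_mem, sub_zero]
        using hx n
    ext k
    simpa using (mem_J12_pow (k + 1)).mp (h (k + 1)) k (by omega)
  prec' x hx := by
    have hx' : ∀ {m n : ℕ}, m ≤ n → x m - x n ∈ J12 ^ m := by
      intro m n h
      simpa only [← Ideal.one_eq_top, smul_eq_mul, mul_one, SModEq.sub_mem] using hx h
    refine ⟨PowerSeries.mk fun k => PowerSeries.coeff k (x (k + 1)), fun n => ?_⟩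
    simp only [← Ideal.one_eq_top, smul_eq_mul, mul_one, SModEq.sub_mem]
    rw [mem_J12_pow]
    intro k hk
    simp only [map_sub, PowerSeries.coeff_mk]
    rcases le_or_gt (k + 1) n with h | h
    · have h2 := (mem_J12_pow (k + 1)).mp (hx' h) k (by omega)
      rw [map_sub] at h2
      linarith
    · have h2 := (mem_J12_pow n).mp (hx' (by omega : n ≤ k + 1)) k (by omega)
      rw [map_sub] at h2
      linarith

/-- `-f` viewed as a monic polynomial in `y` over `ℚ⟦X⟧`. -/
noncomputable def FF : Polynomial (PowerSeries ℚ) :=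
  Polynomial.X ^ 4 + Polynomial.C (PX + 1) * Polynomial.X ^ 3
    + Polynomial.C (PX + 1) * Polynomial.X ^ 2
    + Polynomial.C (-PX ^ 3 + PX ^ 2 + PX - 1) * Polynomial.X
    + Polynomial.C (PX ^ 4 + PX ^ 3)

lemma FF_monic : FF.Monic := by
  unfold FF
  monicity!

lemma eval_FF (a : PowerSeries ℚ) :
    FF.eval a = a ^ 4 + (PX + 1) * a ^ 3 + (PX + 1) * a ^ 2
      + (-PX ^ 3 + PX ^ 2 + PX - 1) * a + (PX ^ 4 + PX ^ 3) := by
  simp [FF]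

lemma hppf : pp ^ 4 + (PX + 1) * pp ^ 3 + (PX + 1) * pp ^ 2
    + (-PX ^ 3 + PX ^ 2 + PX - 1) * pp + (PX ^ 4 + PX ^ 3) = PX ^ 12 * Qs := by
  unfold pp Qs
  simp only [map_ofNat]
  ring

lemma hppg : -PX ^ 3 + PX ^ 2 * pp - pp ^ 3 - 2 * PX * pp - pp ^ 2 + pp = PX ^ 12 * Rs := by
  unfold pp Rs
  simp only [map_ofNat]
  ring

lemma FF_eval_pp_mem : FF.eval pp ∈ J12 := by
  rw [eval_FF, J12, Ideal.mem_span_singleton]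
  exact ⟨Qs, hppf⟩

lemma FF_deriv_eval : FF.derivative.eval pp
    = 4 * pp ^ 3 + 3 * (PX + 1) * pp ^ 2 + 2 * (PX + 1) * pp + (-PX ^ 3 + PX ^ 2 + PX - 1) := by
  unfold FF
  simp only [Polynomial.derivative_add, Polynomial.derivative_mul, Polynomial.derivative_C,
    Polynomial.derivative_X_pow, Polynomial.derivative_X, Polynomial.eval_add, Polynomial.eval_mul,
    Polynomial.eval_pow, Polynomial.eval_C, Polynomial.eval_X, Polynomial.eval_natCast,
    Polynomial.eval_zero, Polynomial.eval_one, Nat.cast_ofNat]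
  push_cast
  ring

lemma FF_deriv_unit : IsUnit (FF.derivative.eval pp) := by
  rw [PowerSeries.isUnit_iff_constantCoeff, FF_deriv_eval]
  have h : PowerSeries.constantCoeff
      (4 * pp ^ 3 + 3 * (PX + 1) * pp ^ 2 + 2 * (PX + 1) * pp + (-PX ^ 3 + PX ^ 2 + PX - 1))
      = -1 := by
    simp [pp]
  rw [h]
  exact isUnit_one.neg

lemma coeff_pp (k : ℕ) (hk : k < 4) :
    PowerSeries.coeff k pp = if k = 3 then 1 else 0 := by
  interval_cases k <;>
    norm_num [pp, PowerSeries.coeff_C_mul_X_pow, PowerSeries.coeff_X_pow]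

end Stmt14Aux

open Stmt14Aux in
/-- **Computational claims of Proposition 10.4.** Let
`f = −x⁴ + x³y − xy³ − y⁴ − x³ − x²y − xy² − y³ − xy − y² + y` and
`g = −x³ + x²y − y³ − 2xy − y² + y` in `ℚ[x,y]`.  There is a power series `φ ∈ ℚ⟦X⟧`
with zero constant coefficient such that `f(X, φ) = 0`, the coefficients of `X` and
`X²` in `φ` vanish while the coefficient of `X³` equals `1`, and `g(X, φ)` has order
at least `12`. -/
theorem stmt14 (f g : MvPolynomial (Fin 2) ℚ)
    (hf : f = -X 0 ^ 4 + X 0 ^ 3 * X 1 - X 0 * X 1 ^ 3 - X 1 ^ 4 - X 0 ^ 3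
      - X 0 ^ 2 * X 1 - X 0 * X 1 ^ 2 - X 1 ^ 3 - X 0 * X 1 - X 1 ^ 2 + X 1)
    (hg : g = -X 0 ^ 3 + X 0 ^ 2 * X 1 - X 1 ^ 3 - 2 * X 0 * X 1 - X 1 ^ 2 + X 1) :
    ∃ φ : PowerSeries ℚ,
      PowerSeries.constantCoeff φ = 0 ∧
      aeval ![PowerSeries.X, φ] f = 0 ∧
      PowerSeries.coeff 1 φ = 0 ∧
      PowerSeries.coeff 2 φ = 0 ∧
      PowerSeries.coeff 3 φ = 1 ∧
      (∀ i < 12, PowerSeries.coeff i (aeval ![PowerSeries.X, φ] g) = 0) := by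
  obtain ⟨a, haroot, hamod⟩ :=
    HenselianRing.is_henselian (I := J12) FF FF_monic pp FF_eval_pp_mem
      (FF_deriv_unit.map (Ideal.Quotient.mk J12))
  obtain ⟨e, he⟩ := Ideal.mem_span_singleton.mp (show a - pp ∈ Ideal.span {(PowerSeries.X : PowerSeries ℚ) ^ 12} from hamod)
  have hcoeff : ∀ k < 12, PowerSeries.coeff k a = PowerSeries.coeff k pp := by
    intro k hk
    have h0 : PowerSeries.coeff k (a - pp) = 0 :=
      PowerSeries.X_pow_dvd_iff.mp ⟨e, he⟩ k hk
    rw [map_sub, sub_eq_zero] at h0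
    exact h0
  refine ⟨a, ?_, ?_, ?_, ?_, ?_, ?_⟩
  · rw [← PowerSeries.coeff_zero_eq_constantCoeff_apply, hcoeff 0 (by norm_num), coeff_pp 0 (by norm_num)]
    norm_num
  · have hkey : aeval ![PowerSeries.X, a] f = -(FF.eval a) := by
      rw [hf]
      simp only [FF, map_add, map_sub, map_neg, map_mul, map_pow, map_one, aeval_X,
        Matrix.cons_val_zero, Matrix.cons_val_one, Matrix.head_cons,
        Polynomial.eval_add, Polynomial.eval_sub, Polynomial.eval_neg, Polynomial.eval_mul,
        Polynomial.eval_pow, Polynomial.eval_C, Polynomial.eval_X, Polynomial.eval_one]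
      ring
    rw [hkey, show FF.eval a = 0 from haroot, neg_zero]
  · rw [hcoeff 1 (by norm_num), coeff_pp 1 (by norm_num)]; norm_num
  · rw [hcoeff 2 (by norm_num), coeff_pp 2 (by norm_num)]; norm_num
  · rw [hcoeff 3 (by norm_num), coeff_pp 3 (by norm_num)]; norm_num
  · intro i hi
    have hexp : aeval ![PowerSeries.X, a] g
        = -PX ^ 3 + PX ^ 2 * a - a ^ 3 - 2 * PX * a - a ^ 2 + a := by
      rw [hg]
      simp only [map_add, map_sub, map_neg, map_mul, map_pow, aeval_X, map_ofNat,
        Matrix.cons_val_zero, Matrix.cons_val_one, Matrix.head_cons]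
    have hdvd : (PowerSeries.X : PowerSeries ℚ) ^ 12 ∣ aeval ![PowerSeries.X, a] g := by
      refine ⟨Rs + e * (1 + PX ^ 2 - 2 * PX - (a + pp) - (a ^ 2 + a * pp + pp ^ 2)), ?_⟩
      rw [hexp]
      linear_combination hppg + he * (1 + PX ^ 2 - 2 * PX - (a + pp) - (a ^ 2 + a * pp + pp ^ 2))
    exact PowerSeries.X_pow_dvd_iff.mp hdvd i hi
end
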